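/- arXiv:1611.06081 — 10 statements merged into one kernel-verified Lean document; each statement's English description precedes it below -/
import Mathlib

section
/- Let m ≥ 2 and p ≥ 0 be integers, let R₀ > 0, and let (α_i)_{i≥0} and (β_i)_{i≥0} be real sequences such that the power series A(r) = Σ_{i≥0} α_i r^i and B(r) = Σ_{i≥0} β_i r^i converge for every r ∈ [0, R₀), with α₀ = m−1, α₁ = 0, β₀ = p(p+m−2) and β₁ = 0. Then there exists a real sequence (ξ_i)_{i≥0} with ξ_i = 0 for all i < p and ξ_p = 1, such that the power series a(r) = Σ_{i≥0} ξ_i r^i converges for every r ∈ [0, R₀), and a satisfies the singular Sturm–Liouville equation r² a''(r) + A(r)·r·a'(r) − B(r)·a(r) = 0 for all r ∈ (0, R₀). -/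
/-!
Frobenius' method at the regular singular point `r = 0`. For `a = ∑ ξₙ rⁿ` the coefficient of
`rⁿ` in `r² a'' + A r a' - B a` is `I(n) ξₙ + ∑_{j<n} (α_{n-j} j - β_{n-j}) ξⱼ`, where
`I(s) = s (s - 1) + α₀ s - β₀ = (s - p) (s + p + m - 2)` is the indicial polynomial. As `I(p) = 0`
and `I(n) > 0` for `n > p`, these coefficients vanish for the sequence defined recursively from
`ξₚ = 1`. If `|αᵢ| ρⁱ, |βᵢ| ρⁱ ≤ C` and `σ < ρ`, the recursion bounds `I(n) |ξₙ| σⁿ` by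
`C n / (1 - σ/ρ)` times `max_{j<n} |ξⱼ| σʲ`; since `I(n)` grows quadratically, `|ξₙ| σⁿ` stays
bounded, so `∑ ξₙ rⁿ` converges wherever `A` and `B` do. Termwise differentiation and the Cauchy
product turn the vanishing coefficients into the differential equation.
-/

open Set Finset Filter

lemma sum_antidiagonal_eq_sum_range_add {M : Type*} [AddCommMonoid M] (g : ℕ → ℕ → M) (n : ℕ) :
    ∑ ij ∈ antidiagonal n, g ij.1 ij.2 = ∑ j ∈ range n, g (n - j) j + g 0 n := by
  rw [← Nat.sum_antidiagonal_swap]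
  simp only [Prod.fst_swap, Prod.snd_swap]
  rw [Nat.sum_antidiagonal_eq_sum_range_succ (fun j i => g i j), sum_range_succ, Nat.sub_self]

lemma geom_sum_range_pow_sub_le {q : ℝ} (hq0 : 0 ≤ q) (hq1 : q < 1) (n : ℕ) :
    ∑ j ∈ range n, q ^ (n - j) ≤ 1 / (1 - q) := by
  calc ∑ j ∈ range n, q ^ (n - j) ≤ ∑ j ∈ range n, q ^ (n - 1 - j) :=
        sum_le_sum fun j _ => pow_le_pow_of_le_one hq0 hq1.le (by omega)
    _ = ∑ j ∈ Ico 0 n, q ^ j := by rw [sum_range_reflect (q ^ ·) n, range_eq_Ico]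
    _ ≤ q ^ 0 / (1 - q) := geom_sum_Ico_le_of_lt_one hq0 hq1
    _ = 1 / (1 - q) := by rw [pow_zero]

lemma hasSum_of_hasSum_succ {G : Type*} [AddCommGroup G] [TopologicalSpace G]
    [IsTopologicalAddGroup G] {f : ℕ → G} {a : G} (h : HasSum (fun n => f (n + 1)) a)
    (h0 : f 0 = 0) : HasSum f a := by
  rw [← hasSum_nat_add_iff' 1]
  simpa [h0] using h

lemma Summable.exists_abs_mul_pow_le {c : ℕ → ℝ} {r : ℝ} (h : Summable fun n => c n * r ^ n) :
    ∃ C, ∀ n, |c n| * |r| ^ n ≤ C := by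
  obtain ⟨C, hC⟩ := h.tendsto_atTop_zero.abs.bddAbove_range
  exact ⟨C, fun n => by simpa only [abs_mul, abs_pow] using hC ⟨n, rfl⟩⟩

lemma summable_pow_mul_abs_mul_pow_of_bound {c : ℕ → ℝ} {ρ C x : ℝ}
    (hC : ∀ n, |c n| * ρ ^ n ≤ C) (hx : |x| < ρ) (k : ℕ) :
    Summable fun n : ℕ => (n : ℝ) ^ k * (|c n| * |x| ^ n) := by
  have hρ : 0 < ρ := (abs_nonneg x).trans_lt hx
  have hq : ‖|x| / ρ‖ < 1 := by
    rw [Real.norm_of_nonneg (by positivity)]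
    exact (div_lt_one hρ).mpr hx
  refine .of_nonneg_of_le (fun n => by positivity) (fun n => ?_)
    ((summable_pow_mul_geometric_of_norm_lt_one k hq).mul_left C)
  calc (n : ℝ) ^ k * (|c n| * |x| ^ n) = (|c n| * ρ ^ n) * ((n : ℝ) ^ k * (|x| / ρ) ^ n) := by
        rw [div_pow]; field_simp
    _ ≤ C * ((n : ℝ) ^ k * (|x| / ρ) ^ n) := by gcongr; exact hC n

lemma hasSum_mul_pow_antidiagonal {a b : ℕ → ℝ} {x : ℝ} (ha : Summable fun n => |a n| * |x| ^ n)
    (hb : Summable fun n => |b n| * |x| ^ n) :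
    HasSum (fun n => (∑ ij ∈ antidiagonal n, a ij.1 * b ij.2) * x ^ n)
      ((∑' n, a n * x ^ n) * ∑' n, b n * x ^ n) := by
  have ha' : Summable fun n => ‖a n * x ^ n‖ := by
    simpa only [norm_mul, norm_pow, Real.norm_eq_abs] using ha
  have hb' : Summable fun n => ‖b n * x ^ n‖ := by
    simpa only [norm_mul, norm_pow, Real.norm_eq_abs] using hb
  rw [tsum_mul_tsum_eq_tsum_sum_antidiagonal_of_summable_norm ha' hb']
  refine (summable_norm_sum_mul_antidiagonal_of_summable_norm ha' hb').of_norm.hasSum.congr_fun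
    fun n => ?_
  rw [sum_mul]
  refine sum_congr rfl fun ij hij => ?_
  rw [← mem_antidiagonal.mp hij, pow_add]
  ring

def ConvergesBelow (c : ℕ → ℝ) (R : ℝ) : Prop :=
  ∀ r ∈ Ico (0 : ℝ) R, Summable fun n => c n * r ^ n

namespace ConvergesBelow

variable {c : ℕ → ℝ} {R : ℝ}

lemma exists_abs_mul_pow_le (hc : ConvergesBelow c R) {ρ : ℝ} (hρ : ρ ∈ Ico 0 R) :
    ∃ C, ∀ n, |c n| * ρ ^ n ≤ C := by
  simpa only [abs_of_nonneg hρ.1] using (hc ρ hρ).exists_abs_mul_pow_le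

lemma summable_pow_mul_abs_mul_pow (hc : ConvergesBelow c R) {x : ℝ} (hx : |x| < R) (k : ℕ) :
    Summable fun n : ℕ => (n : ℝ) ^ k * (|c n| * |x| ^ n) := by
  have hx0 := abs_nonneg x
  obtain ⟨C, hC⟩ := hc.exists_abs_mul_pow_le (ρ := (|x| + R) / 2) ⟨by linarith, by linarith⟩
  exact summable_pow_mul_abs_mul_pow_of_bound hC (by linarith) k

lemma summable_abs_mul_pow (hc : ConvergesBelow c R) {x : ℝ} (hx : |x| < R) :
    Summable fun n => |c n| * |x| ^ n := by
  simpa only [pow_zero, one_mul] using hc.summable_pow_mul_abs_mul_pow hx 0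

lemma summable (hc : ConvergesBelow c R) {x : ℝ} (hx : |x| < R) :
    Summable fun n => c n * x ^ n :=
  .of_norm <| by simpa only [norm_mul, norm_pow, Real.norm_eq_abs] using hc.summable_abs_mul_pow hx

lemma derivCoeff (hc : ConvergesBelow c R) : ConvergesBelow (fun n => (n + 1) * c (n + 1)) R := by
  intro r hr
  obtain ⟨s, hrs, hsR⟩ := exists_between hr.2
  have hs : 0 < s := hr.1.trans_lt hrs
  have hshift := (summable_nat_add_iff 1).mpr
    (hc.summable_pow_mul_abs_mul_pow (x := s) (by rwa [abs_of_pos hs]) 1)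
  refine .of_norm_bounded (hshift.div_const s) fun n => ?_
  calc ‖(n + 1) * c (n + 1) * r ^ n‖ = (n + 1) * |c (n + 1)| * r ^ n := by
        rw [Real.norm_eq_abs, abs_mul, abs_mul, abs_pow, abs_of_nonneg hr.1,
          abs_of_nonneg (by positivity : (0 : ℝ) ≤ n + 1)]
    _ ≤ (n + 1) * |c (n + 1)| * s ^ n := by gcongr; exact hr.1
    _ = ((n + 1 : ℕ) : ℝ) ^ 1 * (|c (n + 1)| * |s| ^ (n + 1)) / s := by
        rw [abs_of_pos hs, pow_succ]; push_cast; field_simp; ring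

lemma hasDerivAt (hc : ConvergesBelow c R) {x : ℝ} (hx : |x| < R) :
    HasDerivAt (fun y => ∑' n, c n * y ^ n) (∑' n, (n + 1) * c (n + 1) * x ^ n) x := by
  obtain ⟨s, hxs, hsR⟩ := exists_between hx
  have hs : 0 < s := (abs_nonneg x).trans_lt hxs
  have hu : Summable fun n : ℕ => n * |c n| * s ^ (n - 1) := by
    rw [← summable_nat_add_iff 1]
    refine (hc.derivCoeff.summable_abs_mul_pow (x := s) (by rwa [abs_of_pos hs])).congr
      fun n => ?_
    rw [abs_mul, abs_of_pos hs, abs_of_nonneg (by positivity : (0 : ℝ) ≤ n + 1),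
      Nat.add_sub_cancel, Nat.cast_add_one]
  have hbound : ∀ n, ∀ y ∈ Metric.ball (0 : ℝ) s,
      ‖c n * (n * y ^ (n - 1))‖ ≤ n * |c n| * s ^ (n - 1) := by
    intro n y hy
    rw [mem_ball_zero_iff, Real.norm_eq_abs] at hy
    calc ‖c n * (n * y ^ (n - 1))‖ = n * |c n| * |y| ^ (n - 1) := by
          rw [Real.norm_eq_abs, abs_mul, abs_mul, Nat.abs_cast, abs_pow]; ring
      _ ≤ n * |c n| * s ^ (n - 1) := by gcongr
  have hball : x ∈ Metric.ball (0 : ℝ) s := by rwa [mem_ball_zero_iff, Real.norm_eq_abs]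
  have hsum : HasSum (fun n => c n * (n * x ^ (n - 1))) (∑' n, (n + 1) * c (n + 1) * x ^ n) :=
    hasSum_of_hasSum_succ ((hc.derivCoeff.summable hx).hasSum.congr_fun fun n => by
      simp only [Nat.add_sub_cancel]; push_cast; ring) (by simp)
  rw [← hsum.tsum_eq]
  exact hasDerivAt_tsum_of_isPreconnected hu Metric.isOpen_ball (convex_ball 0 s).isPreconnected
    (fun n y _ => (hasDerivAt_pow n y).const_mul (c n)) hbound hball (hc.summable hx) hball

lemma hasSum_mul_deriv (hc : ConvergesBelow c R) {x : ℝ} (hx : |x| < R) :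
    HasSum (fun n => n * c n * x ^ n) (x * deriv (fun y => ∑' n, c n * y ^ n) x) := by
  rw [(hc.hasDerivAt hx).deriv]
  exact hasSum_of_hasSum_succ (((hc.derivCoeff.summable hx).hasSum.mul_left x).congr_fun
    fun n => by push_cast; ring) (by simp)

lemma hasSum_sq_mul_deriv_deriv (hc : ConvergesBelow c R) {x : ℝ} (hx : |x| < R) :
    HasSum (fun n => n * (n - 1) * c n * x ^ n)
      (x ^ 2 * deriv (deriv (fun y => ∑' n, c n * y ^ n)) x) := by
  have hderiv : deriv (fun y => ∑' n, c n * y ^ n) =ᶠ[nhds x]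
      fun y => ∑' n, (n + 1) * c (n + 1) * y ^ n := by
    filter_upwards [(isOpen_lt continuous_abs continuous_const).mem_nhds hx] with y hy
    exact (hc.hasDerivAt hy).deriv
  rw [hderiv.deriv_eq, pow_two, mul_assoc]
  exact hasSum_of_hasSum_succ (((hc.derivCoeff.hasSum_mul_deriv hx).mul_left x).congr_fun
    fun n => by push_cast; ring) (by simp)

end ConvergesBelow

noncomputable def indicial (α β : ℕ → ℝ) (s : ℝ) : ℝ := s * (s - 1) + α 0 * s - β 0

lemma indicial_eventually_gt (α β : ℕ → ℝ) (M : ℝ) :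
    ∀ᶠ n : ℕ in atTop, M * n < indicial α β n := by
  obtain ⟨N, hN⟩ := exists_nat_ge (M + 2 - α 0 + |β 0|)
  filter_upwards [eventually_ge_atTop (N + 1)] with n hn
  have hn' : (N : ℝ) + 1 ≤ n := by exact_mod_cast hn
  rw [indicial]
  nlinarith [le_abs_self (β 0), abs_nonneg (β 0)]

/-- The contribution of `ξ₀, …, ξₙ₋₁` to the coefficient of `rⁿ` in `r² a'' + A r a' - B a`. -/
def frobeniusSum (α β ξ : ℕ → ℝ) (n : ℕ) : ℝ :=
  ∑ j ∈ range n, (α (n - j) * j - β (n - j)) * ξ j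

lemma frobeniusSum_eq_zero {α β ξ : ℕ → ℝ} {n : ℕ} (h : ∀ j < n, ξ j = 0) :
    frobeniusSum α β ξ n = 0 :=
  sum_eq_zero fun j hj => by rw [h j (mem_range.mp hj), mul_zero]

/-- The coefficient of `rⁿ` in `r² a'' + A r a' - B a` vanishes for every `n`, where
`a = ∑ ξₙ rⁿ`, `A = ∑ αₙ rⁿ` and `B = ∑ βₙ rⁿ`. -/
def IsFormalSolution (α β ξ : ℕ → ℝ) : Prop :=
  ∀ n : ℕ, (n : ℝ) * (n - 1) * ξ n + ∑ ij ∈ antidiagonal n, (α ij.1 * ij.2 - β ij.1) * ξ ij.2 = 0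

lemma isFormalSolution_iff {α β ξ : ℕ → ℝ} :
    IsFormalSolution α β ξ ↔ ∀ n : ℕ, indicial α β n * ξ n + frobeniusSum α β ξ n = 0 := by
  refine forall_congr' fun n => ?_
  rw [sum_antidiagonal_eq_sum_range_add (fun i j => (α i * j - β i) * ξ j), indicial, frobeniusSum]
  constructor <;> intro h <;> linarith

noncomputable def frobeniusCoeff (α β : ℕ → ℝ) (p : ℕ) : ℕ → ℝ
  | n => if n = p then 1 else
      -(∑ j : Fin n, (α (n - j) * j - β (n - j)) * frobeniusCoeff α β p j) / indicial α β n

section frobeniusCoeff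

variable {α β : ℕ → ℝ} {p : ℕ}

lemma frobeniusCoeff_eq (n : ℕ) : frobeniusCoeff α β p n =
    if n = p then 1 else -frobeniusSum α β (frobeniusCoeff α β p) n / indicial α β n := by
  rw [frobeniusCoeff, frobeniusSum,
    Fin.sum_univ_eq_sum_range (fun j => (α (n - j) * j - β (n - j)) * frobeniusCoeff α β p j)]

lemma frobeniusCoeff_self : frobeniusCoeff α β p p = 1 := by
  rw [frobeniusCoeff_eq, if_pos rfl]

lemma frobeniusCoeff_of_lt {n : ℕ} (hn : n < p) : frobeniusCoeff α β p n = 0 := by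
  induction n using Nat.strong_induction_on with
  | _ n ih =>
    rw [frobeniusCoeff_eq, if_neg hn.ne, frobeniusSum_eq_zero fun j hj => ih j hj (hj.trans hn),
      neg_zero, zero_div]

lemma isFormalSolution_frobeniusCoeff (hp : indicial α β p = 0)
    (hgt : ∀ n > p, indicial α β n ≠ 0) : IsFormalSolution α β (frobeniusCoeff α β p) := by
  refine isFormalSolution_iff.mpr fun n => ?_
  rcases le_or_gt n p with hn | hn
  · rw [frobeniusSum_eq_zero fun j hj => frobeniusCoeff_of_lt (hj.trans_le hn)]
    rcases hn.lt_or_eq with hn | rfl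
    · rw [frobeniusCoeff_of_lt hn, mul_zero, add_zero]
    · rw [hp, zero_mul, add_zero]
  · rw [frobeniusCoeff_eq n, if_neg hn.ne', mul_div_cancel₀ _ (hgt n hn), neg_add_cancel]

end frobeniusCoeff

lemma abs_frobeniusSum_mul_pow_le {α β ξ : ℕ → ℝ} {σ ρ C K : ℝ} {n : ℕ} (hσ : 0 < σ)
    (hσρ : σ < ρ) (hα : ∀ i, |α i| * ρ ^ i ≤ C) (hβ : ∀ i, |β i| * ρ ^ i ≤ C) (hK : 0 ≤ K)
    (hξ : ∀ j < n, |ξ j| * σ ^ j ≤ K) :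
    |frobeniusSum α β ξ n| * σ ^ n ≤ C / (1 - σ / ρ) * K * n := by
  have hρ : 0 < ρ := hσ.trans hσρ
  have hC : 0 ≤ C := (by positivity : 0 ≤ |α 0| * ρ ^ 0).trans (hα 0)
  have hterm : ∀ j ∈ range n, |(α (n - j) * j - β (n - j)) * ξ j| * σ ^ n
      ≤ C * K * n * (σ / ρ) ^ (n - j) := fun j hj => by
    have hjn := mem_range.mp hj
    have hcoeff : |α (n - j) * j - β (n - j)| * ρ ^ (n - j) ≤ C * n := by
      have hj1 : (j : ℝ) + 1 ≤ n := by exact_mod_cast hjn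
      calc |α (n - j) * j - β (n - j)| * ρ ^ (n - j)
          ≤ (|α (n - j)| * ρ ^ (n - j)) * j + |β (n - j)| * ρ ^ (n - j) := by
            have := abs_sub (α (n - j) * j) (β (n - j))
            rw [abs_mul, Nat.abs_cast] at this
            nlinarith [pow_pos hρ (n - j)]
        _ ≤ C * j + C := by gcongr <;> [exact hα _; exact hβ _]
        _ ≤ C * n := by nlinarith
    have hsplit : σ ^ n = σ ^ j * ρ ^ (n - j) * (σ / ρ) ^ (n - j) := by
      rw [div_pow, mul_assoc, mul_div_cancel₀ _ (by positivity), ← pow_add,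
        Nat.add_sub_cancel' hjn.le]
    calc |(α (n - j) * j - β (n - j)) * ξ j| * σ ^ n
        = (|α (n - j) * j - β (n - j)| * ρ ^ (n - j)) * (|ξ j| * σ ^ j) * (σ / ρ) ^ (n - j) := by
          rw [abs_mul, hsplit]; ring
      _ ≤ C * n * K * (σ / ρ) ^ (n - j) := by gcongr; exact hξ j hjn
      _ = C * K * n * (σ / ρ) ^ (n - j) := by ring
  calc |frobeniusSum α β ξ n| * σ ^ n
      ≤ ∑ j ∈ range n, |(α (n - j) * j - β (n - j)) * ξ j| * σ ^ n := by
        rw [frobeniusSum, ← sum_mul]; gcongr; exact abs_sum_le_sum_abs _ _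
    _ ≤ ∑ j ∈ range n, C * K * n * (σ / ρ) ^ (n - j) := sum_le_sum hterm
    _ = C * K * n * ∑ j ∈ range n, (σ / ρ) ^ (n - j) := by rw [mul_sum]
    _ ≤ C * K * n * (1 / (1 - σ / ρ)) := by
        gcongr; exact geom_sum_range_pow_sub_le (by positivity) ((div_lt_one hρ).mpr hσρ) n
    _ = C / (1 - σ / ρ) * K * n := by ring

namespace IsFormalSolution

variable {α β ξ : ℕ → ℝ}

lemma exists_abs_mul_pow_le (h : IsFormalSolution α β ξ) {σ ρ C : ℝ} (hσ : 0 < σ)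
    (hσρ : σ < ρ) (hα : ∀ i, |α i| * ρ ^ i ≤ C) (hβ : ∀ i, |β i| * ρ ^ i ≤ C) :
    ∃ K, ∀ n, |ξ n| * σ ^ n ≤ K := by
  set M := C / (1 - σ / ρ)
  obtain ⟨N, hN⟩ := eventually_atTop.mp
    ((indicial_eventually_gt α β 0).and (indicial_eventually_gt α β M))
  set K := ∑ n ∈ range N, |ξ n| * σ ^ n
  have hK : 0 ≤ K := sum_nonneg fun n _ => by positivity
  refine ⟨K, fun n => ?_⟩
  induction n using Nat.strong_induction_on with
  | _ n ih =>
    rcases lt_or_ge n N with hn | hn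
    · exact single_le_sum (f := fun j => |ξ j| * σ ^ j) (fun j _ => by positivity)
        (mem_range.mpr hn)
    obtain ⟨hIpos, hIgt⟩ := hN n hn
    rw [zero_mul] at hIpos
    refine le_of_mul_le_mul_left ?_ hIpos
    calc indicial α β n * (|ξ n| * σ ^ n) = |frobeniusSum α β ξ n| * σ ^ n := by
          rw [← mul_assoc, ← abs_of_pos hIpos, ← abs_mul,
            eq_neg_of_add_eq_zero_left (isFormalSolution_iff.mp h n), abs_neg]
      _ ≤ M * K * n := abs_frobeniusSum_mul_pow_le hσ hσρ hα hβ hK ih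
      _ ≤ indicial α β n * K := by nlinarith

lemma convergesBelow (h : IsFormalSolution α β ξ) {R : ℝ} (hα : ConvergesBelow α R)
    (hβ : ConvergesBelow β R) : ConvergesBelow ξ R := by
  intro r hr
  obtain ⟨σ, hrσ, hσR⟩ := exists_between hr.2
  obtain ⟨ρ, hσρ, hρR⟩ := exists_between hσR
  have hσ : 0 < σ := hr.1.trans_lt hrσ
  obtain ⟨Ca, hCa⟩ := hα.exists_abs_mul_pow_le ⟨(hσ.trans hσρ).le, hρR⟩
  obtain ⟨Cb, hCb⟩ := hβ.exists_abs_mul_pow_le ⟨(hσ.trans hσρ).le, hρR⟩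
  obtain ⟨K, hK⟩ := h.exists_abs_mul_pow_le hσ hσρ
    (fun i => (hCa i).trans (le_max_left Ca Cb)) (fun i => (hCb i).trans (le_max_right Ca Cb))
  refine .of_norm ?_
  simpa only [pow_zero, one_mul, norm_mul, norm_pow, Real.norm_eq_abs] using
    summable_pow_mul_abs_mul_pow_of_bound hK (by rwa [abs_of_nonneg hr.1]) 0

lemma ode (h : IsFormalSolution α β ξ) {R : ℝ} (hα : ConvergesBelow α R)
    (hβ : ConvergesBelow β R) (hξ : ConvergesBelow ξ R) {x : ℝ} (hx : |x| < R) :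
    x ^ 2 * deriv (deriv (fun y => ∑' n, ξ n * y ^ n)) x
      + (∑' n, α n * x ^ n) * x * deriv (fun y => ∑' n, ξ n * y ^ n) x
      - (∑' n, β n * x ^ n) * (∑' n, ξ n * x ^ n) = 0 := by
  have hA := hasSum_mul_pow_antidiagonal (b := fun n => n * ξ n) (hα.summable_abs_mul_pow hx)
    (by simpa only [pow_one, abs_mul, Nat.abs_cast, mul_assoc] using
      hξ.summable_pow_mul_abs_mul_pow hx 1)
  rw [(hξ.hasSum_mul_deriv hx).tsum_eq] at hA
  have hB := hasSum_mul_pow_antidiagonal (hβ.summable_abs_mul_pow hx) (hξ.summable_abs_mul_pow hx)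
  rw [mul_assoc]
  refine (((hξ.hasSum_sq_mul_deriv_deriv hx).add hA).sub hB).unique ?_
  convert hasSum_zero with n
  have hsplit : ∑ ij ∈ antidiagonal n, (α ij.1 * ij.2 - β ij.1) * ξ ij.2
      = ∑ ij ∈ antidiagonal n, α ij.1 * (ij.2 * ξ ij.2)
        - ∑ ij ∈ antidiagonal n, β ij.1 * ξ ij.2 := by
    rw [← sum_sub_distrib]
    exact sum_congr rfl fun _ _ => by ring
  linear_combination (h n - hsplit) * x ^ n

end IsFormalSolution

theorem stmt_1_general (m p : ℕ) (hm : 2 ≤ m) (R₀ : ℝ)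
    (α β : ℕ → ℝ)
    (hA : ∀ r ∈ Ico (0:ℝ) R₀, Summable (fun i => α i * r ^ i))
    (hB : ∀ r ∈ Ico (0:ℝ) R₀, Summable (fun i => β i * r ^ i))
    (hα0 : α 0 = (m : ℝ) - 1)
    (hβ0 : β 0 = (p : ℝ) * ((p : ℝ) + (m : ℝ) - 2)) :
    ∃ ξ : ℕ → ℝ, (∀ i < p, ξ i = 0) ∧ ξ p = 1 ∧
      (∀ r ∈ Ico (0:ℝ) R₀, Summable (fun i => ξ i * r ^ i)) ∧
      (∀ r ∈ Ioo (0:ℝ) R₀,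
        r ^ 2 * deriv (deriv (fun x : ℝ => ∑' i, ξ i * x ^ i)) r
          + (∑' i, α i * r ^ i) * r * deriv (fun x : ℝ => ∑' i, ξ i * x ^ i) r
          - (∑' i, β i * r ^ i) * (∑' i, ξ i * r ^ i) = 0) := by
  have hI : ∀ s, indicial α β s = (s - p) * (s + p + m - 2) := fun s => by
    rw [indicial, hα0, hβ0]; ring
  have hξ : IsFormalSolution α β (frobeniusCoeff α β p) := by
    refine isFormalSolution_frobeniusCoeff (by rw [hI]; ring) fun n hn => ?_
    have hpn : (p : ℝ) < n := by exact_mod_cast hn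
    have hm' : (2 : ℝ) ≤ m := by exact_mod_cast hm
    rw [hI]
    exact (mul_pos (by linarith) (by linarith [p.cast_nonneg (α := ℝ)])).ne'
  have hconv : ConvergesBelow (frobeniusCoeff α β p) R₀ := hξ.convergesBelow hA hB
  refine ⟨frobeniusCoeff α β p, fun i hi => frobeniusCoeff_of_lt hi, frobeniusCoeff_self, hconv,
    fun r hr => hξ.ode hA hB hconv ?_⟩
  rw [abs_of_pos hr.1]
  exact hr.2

theorem stmt_1 (m p : ℕ) (hm : 2 ≤ m) (R₀ : ℝ) (hR₀ : 0 < R₀)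
    (α β : ℕ → ℝ)
    (hA : ∀ r ∈ Ico (0:ℝ) R₀, Summable (fun i => α i * r ^ i))
    (hB : ∀ r ∈ Ico (0:ℝ) R₀, Summable (fun i => β i * r ^ i))
    (hα0 : α 0 = (m : ℝ) - 1) (hα1 : α 1 = 0)
    (hβ0 : β 0 = (p : ℝ) * ((p : ℝ) + (m : ℝ) - 2)) (hβ1 : β 1 = 0) :
    ∃ ξ : ℕ → ℝ, (∀ i < p, ξ i = 0) ∧ ξ p = 1 ∧
      (∀ r ∈ Ico (0:ℝ) R₀, Summable (fun i => ξ i * r ^ i)) ∧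
      (∀ r ∈ Ioo (0:ℝ) R₀,
        r ^ 2 * deriv (deriv (fun x : ℝ => ∑' i, ξ i * x ^ i)) r
          + (∑' i, α i * r ^ i) * r * deriv (fun x : ℝ => ∑' i, ξ i * x ^ i) r
          - (∑' i, β i * r ^ i) * (∑' i, ξ i * r ^ i) = 0) :=
  stmt_1_general m p hm R₀ α β hA hB hα0 hβ0
end

section
/- Let m ≥ 2 be an integer and let θ : [0,∞) → ℝ be continuous with θ(0) = 0, θ(t) > 0 for t > 0, and θ continuously differentiable on (0,∞). Suppose that the function h(t) := θ'(t)/((m−1)θ(t)) is non-increasing on (0,∞). Define a(t) = (∫₀^t θ(s) ds)/θ(t) for t > 0. Then a is differentiable on (0,∞) with a'(t) = 1 − (m−1)h(t)a(t), and a'(t) > 0 for every t > 0; in particular a is strictly increasing on (0,∞). -/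
/-!
Put `c = θ'(t)/θ(t)`. Since `h` is non-increasing, `θ' ≥ cθ` on `(0, t)`, so `θ(s)e^{-cs}` is
non-decreasing and `θ(s) ≤ θ(t)e^{c(s-t)}` for `s ≤ t`. Integrating gives
`c ∫₀ᵗ θ ≤ θ(t)(1 - e^{-ct}) < θ(t)` when `c > 0` (and trivially when `c ≤ 0`), which is exactly
`a'(t) = 1 - c a(t) > 0` by the quotient rule.
-/
open Real Set intervalIntegral

theorem monotoneOn_mul_exp_neg_of_mul_le_deriv {f f' : ℝ → ℝ} {a b c : ℝ}
    (hf : ContinuousOn f (Icc a b)) (hderiv : ∀ s ∈ Ioo a b, HasDerivAt f (f' s) s)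
    (hle : ∀ s ∈ Ioo a b, c * f s ≤ f' s) :
    MonotoneOn (fun s => f s * exp (-c * s)) (Icc a b) := by
  refine monotoneOn_of_hasDerivWithinAt_nonneg (convex_Icc a b)
    (hf.mul (by fun_prop)) (f' := fun s => (f' s - c * f s) * exp (-c * s)) ?_ ?_
  all_goals rw [interior_Icc]
  · intro s hs
    have hexp : HasDerivAt (fun s => exp (-c * s)) (exp (-c * s) * -c) s := by
      simpa using ((hasDerivAt_id s).const_mul (-c)).exp
    exact (((hderiv s hs).mul hexp).congr_deriv (by ring)).hasDerivWithinAt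
  · intro s hs
    exact mul_nonneg (sub_nonneg.2 (hle s hs)) (exp_pos _).le

theorem integral_exp_const_mul {c : ℝ} (hc : c ≠ 0) (a b : ℝ) :
    ∫ s in a..b, exp (c * s) = (exp (c * b) - exp (c * a)) / c := by
  rw [integral_comp_mul_left exp hc, integral_exp, smul_eq_mul, inv_mul_eq_div]

theorem mul_integral_lt_of_mul_le_deriv {θ θ' : ℝ → ℝ} {a t c : ℝ} (hat : a < t)
    (hθc : ContinuousOn θ (Icc a t)) (hθa : θ a = 0) (hθpos : ∀ s ∈ Ioc a t, 0 < θ s)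
    (hderiv : ∀ s ∈ Ioo a t, HasDerivAt θ (θ' s) s)
    (hle : ∀ s ∈ Ioo a t, c * θ s ≤ θ' s) :
    c * ∫ s in a..t, θ s < θ t := by
  have hθt : 0 < θ t := hθpos t ⟨hat, le_rfl⟩
  rcases le_or_gt c 0 with hc | hc
  · have hnonneg : 0 ≤ ∫ s in a..t, θ s := integral_nonneg hat.le fun s hs => by
      rcases eq_or_lt_of_le hs.1 with rfl | has
      · exact hθa.ge
      · exact (hθpos s ⟨has, hs.2⟩).le
    exact (mul_nonpos_of_nonpos_of_nonneg hc hnonneg).trans_lt hθt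
  set K := θ t * exp (-c * t)
  have hbound : ∀ s ∈ Icc a t, θ s ≤ K * exp (c * s) := fun s hs => by
    have := monotoneOn_mul_exp_neg_of_mul_le_deriv hθc hderiv hle hs ⟨hat.le, le_rfl⟩ hs.2
    rw [← le_div_iff₀ (exp_pos _)] at this
    simpa only [K, neg_mul, exp_neg, div_inv_eq_mul] using this
  have hintegral : ∫ s in a..t, θ s ≤ ∫ s in a..t, K * exp (c * s) :=
    integral_mono_on hat.le (hθc.intervalIntegrable_of_Icc hat.le)
      (by apply Continuous.intervalIntegrable; fun_prop) hbound
  rw [integral_const_mul, integral_exp_const_mul hc.ne'] at hintegral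
  have hKt : K * exp (c * t) = θ t := by simp only [K, mul_assoc, ← exp_add]; simp
  have hKa : 0 < K * exp (c * a) := by positivity
  calc c * ∫ s in a..t, θ s ≤ K * (exp (c * t) - exp (c * a)) := by
        rw [mul_div_assoc'] at hintegral; rwa [le_div_iff₀ hc, mul_comm] at hintegral
    _ < θ t := by rw [mul_sub, hKt]; linarith

theorem hasDerivAt_integral_div_self {θ : ℝ → ℝ} {θ' a t : ℝ}
    (hint : IntervalIntegrable θ MeasureTheory.volume a t)
    (hmeas : StronglyMeasurableAtFilter θ (nhds t)) (hθ : HasDerivAt θ θ' t) (hθt : θ t ≠ 0) :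
    HasDerivAt (fun r => (∫ s in a..r, θ s) / θ r)
      (1 - θ' / θ t * ((∫ s in a..t, θ s) / θ t)) t := by
  refine ((integral_hasDerivAt_right hint hmeas hθ.continuousAt).div hθ hθt).congr_deriv ?_
  field_simp

theorem antitoneOn_of_antitoneOn_div_const {u : ℝ → ℝ} {s : Set ℝ} {k : ℝ} (hk : 0 < k)
    (h : AntitoneOn (fun x => u x / k) s) : AntitoneOn u s :=
  fun _ hx _ hy hxy => (div_le_div_iff_of_pos_right hk).1 (h hx hy hxy)

theorem stmt_3 (m : ℕ) (hm : 2 ≤ m) (θ : ℝ → ℝ)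
    (hθc : ContinuousOn θ (Set.Ici 0)) (hθ0 : θ 0 = 0)
    (hθpos : ∀ t > (0:ℝ), 0 < θ t)
    (hθC1 : ContDiffOn ℝ 1 θ (Set.Ioi 0))
    (hmono : AntitoneOn (fun t => deriv θ t / (((m:ℝ) - 1) * θ t)) (Set.Ioi 0)) :
    (∀ t > (0:ℝ),
      HasDerivAt (fun r => (∫ s in (0:ℝ)..r, θ s) / θ r)
        (1 - ((m:ℝ) - 1) * (deriv θ t / (((m:ℝ) - 1) * θ t))
          * ((∫ s in (0:ℝ)..t, θ s) / θ t)) t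
      ∧ 0 < 1 - ((m:ℝ) - 1) * (deriv θ t / (((m:ℝ) - 1) * θ t))
          * ((∫ s in (0:ℝ)..t, θ s) / θ t))
    ∧ StrictMonoOn (fun r => (∫ s in (0:ℝ)..r, θ s) / θ r) (Set.Ioi 0) := by
  have hm1 : (0:ℝ) < m - 1 := by
    have : (2:ℝ) ≤ m := by exact_mod_cast hm
    linarith
  have hlogDeriv : AntitoneOn (fun t => deriv θ t / θ t) (Ioi 0) :=
    antitoneOn_of_antitoneOn_div_const hm1 (by simpa only [div_mul_eq_div_div_swap] using hmono)
  have hθderiv : ∀ t > 0, HasDerivAt θ (deriv θ t) t := fun t ht =>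
    ((hθC1.contDiffAt (Ioi_mem_nhds ht)).differentiableAt one_ne_zero).hasDerivAt
  have hderiv_pos : ∀ t > 0, 0 < 1 - deriv θ t / θ t * ((∫ s in (0:ℝ)..t, θ s) / θ t) := by
    intro t ht
    have hθt := hθpos t ht
    have key := mul_integral_lt_of_mul_le_deriv (c := deriv θ t / θ t) ht
      (hθc.mono Icc_subset_Ici_self) hθ0 (fun s hs => hθpos s hs.1)
      (fun s hs => hθderiv s hs.1) fun s hs =>
        (le_div_iff₀ (hθpos s hs.1)).1 (hlogDeriv hs.1 ht hs.2.le)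
    rwa [sub_pos, ← mul_div_assoc, div_lt_one hθt]
  have hderiv : ∀ t > 0, HasDerivAt (fun r => (∫ s in (0:ℝ)..r, θ s) / θ r)
      (1 - deriv θ t / θ t * ((∫ s in (0:ℝ)..t, θ s) / θ t)) t := fun t ht =>
    hasDerivAt_integral_div_self
      ((hθc.mono Icc_subset_Ici_self).intervalIntegrable_of_Icc ht.le)
      (hθC1.continuousOn.stronglyMeasurableAtFilter isOpen_Ioi t ht) (hθderiv t ht) (hθpos t ht).ne'
  have hcancel : ∀ t, ((m:ℝ) - 1) * (deriv θ t / (((m:ℝ) - 1) * θ t)) = deriv θ t / θ t :=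
    fun t => by rw [mul_div_assoc', mul_div_mul_left _ _ hm1.ne']
  simp only [hcancel]
  refine ⟨fun t ht => ⟨hderiv t ht, hderiv_pos t ht⟩, ?_⟩
  refine strictMonoOn_of_deriv_pos (convex_Ioi 0)
    (fun t ht => (hderiv t ht).continuousAt.continuousWithinAt) fun t ht => ?_
  rw [interior_Ioi] at ht
  exact (hderiv t ht).deriv ▸ hderiv_pos t ht
end

section
/- Let m ≥ 2 be an integer, let h : (0,∞) → ℝ be differentiable with h'(t) < 0 for all t > 0, and let a : (0,∞) → (0,∞) be differentiable with a'(t) = 1 − (m−1)h(t)a(t) for all t > 0. Then the function G := a + a·a' is differentiable with G'(t) = 2a'(t)² − (m−1)h'(t)a(t)² > 0 for all t > 0; in particular G is strictly increasing on (0,∞). -/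
open Filter Topology Set

/-- Along a solution of `a' = 1 - c h a` the quantity `a + a a' = 2a - c h a²` has derivative
`2a' - c h' a² - 2 c h a a' = 2a'(1 - c h a) - c h' a² = 2a'² - c h' a²`. -/
theorem hasDerivAt_add_mul_deriv_of_hasDerivAt_eq {a h : ℝ → ℝ} {c t h't : ℝ}
    (ha : ∀ᶠ s in 𝓝 t, HasDerivAt a (1 - c * h s * a s) s) (hh : HasDerivAt h h't t) :
    HasDerivAt (fun s => a s + a s * deriv a s) (2 * deriv a t ^ 2 - c * h't * a t ^ 2) t := by
  have hat : HasDerivAt a (1 - c * h t * a t) t := ha.self_of_nhds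
  have hG : HasDerivAt (fun s => 2 * a s - c * h s * a s ^ 2)
      (2 * deriv a t ^ 2 - c * h't * a t ^ 2) t := by
    refine ((hat.const_mul 2).fun_sub ((hh.const_mul c).fun_mul (hat.fun_pow 2))).congr_deriv ?_
    rw [hat.deriv]
    ring
  refine hG.congr_of_eventuallyEq ?_
  filter_upwards [ha] with s hs
  rw [hs.deriv]
  ring

theorem stmt_4 (m : ℕ) (hm : 2 ≤ m) (h h' a : ℝ → ℝ)
    (hh : ∀ t > (0:ℝ), HasDerivAt h (h' t) t)
    (hh'neg : ∀ t > (0:ℝ), h' t < 0)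
    (hapos : ∀ t > (0:ℝ), 0 < a t)
    (ha : ∀ t > (0:ℝ), HasDerivAt a (1 - ((m:ℝ) - 1) * h t * a t) t) :
    (∀ t > (0:ℝ),
      HasDerivAt (fun s => a s + a s * deriv a s)
        (2 * (deriv a t) ^ 2 - ((m:ℝ) - 1) * h' t * (a t) ^ 2) t
      ∧ 0 < 2 * (deriv a t) ^ 2 - ((m:ℝ) - 1) * h' t * (a t) ^ 2)
    ∧ StrictMonoOn (fun s => a s + a s * deriv a s) (Set.Ioi 0) := by
  have hm₁ : (0:ℝ) < (m:ℝ) - 1 := by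
    have : (2:ℝ) ≤ m := by exact_mod_cast hm
    linarith
  have hG : ∀ t > (0:ℝ), HasDerivAt (fun s => a s + a s * deriv a s)
      (2 * (deriv a t) ^ 2 - ((m:ℝ) - 1) * h' t * (a t) ^ 2) t := fun t ht =>
    hasDerivAt_add_mul_deriv_of_hasDerivAt_eq
      (eventually_of_mem (Ioi_mem_nhds ht) ha) (hh t ht)
  have hG'pos : ∀ t > (0:ℝ), 0 < 2 * (deriv a t) ^ 2 - ((m:ℝ) - 1) * h' t * (a t) ^ 2 := by
    intro t ht
    have : 0 < ((m:ℝ) - 1) * -h' t * a t ^ 2 :=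
      mul_pos (mul_pos hm₁ (neg_pos.mpr (hh'neg t ht))) (pow_pos (hapos t ht) 2)
    nlinarith [sq_nonneg (deriv a t)]
  refine ⟨fun t ht => ⟨hG t ht, hG'pos t ht⟩, strictMonoOn_of_deriv_pos (convex_Ioi 0)
    (fun t ht => (hG t ht).continuousAt.continuousWithinAt) fun t ht => ?_⟩
  rw [interior_Ioi] at ht
  rw [(hG t ht).deriv]
  exact hG'pos t ht
end

section
/- Let m ≥ 2 be an integer, let h : (0,∞) → (0,∞) be twice differentiable with h(t)h''(t) ≥ 2h'(t)² for all t > 0, and let a : (0,∞) → ℝ be differentiable with a'(t) = 1 − (m−1)h(t)a(t) for all t > 0. Then the function H := (a')² − (m−1)h'·a² is non-increasing on (0,∞). -/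
/-!
Write `c = m - 1` and `b = a' = 1 - c h a`. Differentiating `H = b² - c h' a²` and using
`b' = -c (h' a + h b)` gives `H' = -c Q(b, a)` with `Q(x, y) = 2 h x² + 4 h' x y + h'' y²`.
Completing the square, `h Q(x, y) = 2 (h x + h' y)² + (h h'' - 2 h'²) y² ≥ 0`, so `H' ≤ 0`.
-/

open Set

lemma quadratic_nonneg_of_sq_le_mul {p q r : ℝ} (hp : 0 < p) (hpqr : 2 * q ^ 2 ≤ p * r)
    (x y : ℝ) : 0 ≤ 2 * p * x ^ 2 + 4 * q * x * y + r * y ^ 2 := by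
  refine nonneg_of_mul_nonneg_right ?_ hp
  have hsplit : p * (2 * p * x ^ 2 + 4 * q * x * y + r * y ^ 2)
      = 2 * (p * x + q * y) ^ 2 + (p * r - 2 * q ^ 2) * y ^ 2 := by ring
  rw [hsplit]
  have : 0 ≤ p * r - 2 * q ^ 2 := sub_nonneg.2 hpqr
  positivity

/-- The function `H = (a')² - c h' a²` of a solution of `a' = 1 - c h a`. -/
def steklovGradSq (c : ℝ) (h h' a : ℝ → ℝ) (t : ℝ) : ℝ :=
  (1 - c * h t * a t) ^ 2 - c * h' t * a t ^ 2

lemma hasDerivAt_steklovGradSq {c t : ℝ} {h h' h'' a : ℝ → ℝ}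
    (hh : HasDerivAt h (h' t) t) (hh' : HasDerivAt h' (h'' t) t)
    (ha : HasDerivAt a (1 - c * h t * a t) t) :
    HasDerivAt (steklovGradSq c h h' a)
      (-(c * (2 * h t * (1 - c * h t * a t) ^ 2 + 4 * h' t * (1 - c * h t * a t) * a t
        + h'' t * a t ^ 2))) t := by
  have hb : HasDerivAt (fun s => 1 - c * h s * a s)
      (-(c * (h' t * a t + h t * (1 - c * h t * a t)))) t :=
    (((hh.const_mul c).mul ha).const_sub 1).congr_deriv (by ring)
  exact ((hb.pow 2).sub ((hh'.const_mul c).mul (ha.pow 2))).congr_deriv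
    (by simp only [Pi.pow_apply]; ring)

theorem stmt_5 (m : ℕ) (hm : 2 ≤ m) (h h' h'' a : ℝ → ℝ)
    (hhpos : ∀ t > (0:ℝ), 0 < h t)
    (hd1 : ∀ t > (0:ℝ), HasDerivAt h (h' t) t)
    (hd2 : ∀ t > (0:ℝ), HasDerivAt h' (h'' t) t)
    (hineq : ∀ t > (0:ℝ), 2 * (h' t) ^ 2 ≤ h t * h'' t)
    (ha : ∀ t > (0:ℝ), HasDerivAt a (1 - ((m:ℝ) - 1) * h t * a t) t) :
    AntitoneOn
      (fun t => (1 - ((m:ℝ) - 1) * h t * a t) ^ 2 - ((m:ℝ) - 1) * h' t * (a t) ^ 2)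
      (Set.Ioi 0) := by
  have hc : (0:ℝ) ≤ (m:ℝ) - 1 := by
    have : (2:ℝ) ≤ m := by exact_mod_cast hm
    linarith
  have hH (t : ℝ) (ht : t ∈ Ioi (0:ℝ)) :=
    hasDerivAt_steklovGradSq (hd1 t ht) (hd2 t ht) (ha t ht)
  show AntitoneOn (steklovGradSq ((m:ℝ) - 1) h h' a) (Ioi 0)
  refine antitoneOn_of_hasDerivWithinAt_nonpos (convex_Ioi 0)
    (fun t ht => (hH t ht).continuousAt.continuousWithinAt)
    (fun t ht => (hH t (interior_subset ht)).hasDerivWithinAt) fun t ht => ?_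
  rw [interior_Ioi] at ht
  exact neg_nonpos.2 <| mul_nonneg hc <|
    quadratic_nonneg_of_sq_le_mul (hhpos t ht) (hineq t ht) _ _
end

section
/- Let k ∈ [0,1] and define h : (0,∞) → ℝ by h(r) = coth(r) + k·tanh(r). Then for every r > 0 one has h(r)·h''(r) ≥ 2·(1/sinh(r)² + k/cosh(r)²)² ≥ 2·h'(r)². -/
/-!
With `a = 1 / sinh r ^ 2` and `b = k / cosh r ^ 2` one has `h' = b - a`, and the identity
`cosh ^ 2 = 1 + sinh ^ 2` turns `h * h''` into `2 (a + b) (a + b + 1 - k)`. Both inequalities are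
then immediate from `a, b ≥ 0` and `k ≤ 1`.
-/

open Real

namespace Real

theorem hasDerivAt_tanh (x : ℝ) : HasDerivAt tanh (1 / cosh x ^ 2) x := by
  have h := (hasDerivAt_sinh x).div (hasDerivAt_cosh x) (cosh_pos x).ne'
  rw [show sinh / cosh = tanh from funext fun s => (tanh_eq_sinh_div_cosh s).symm] at h
  refine h.congr_deriv ?_
  rw [← cosh_sq_sub_sinh_sq x]
  ring

theorem hasDerivAt_cosh_div_sinh {x : ℝ} (hx : sinh x ≠ 0) :
    HasDerivAt (fun s => cosh s / sinh s) (-(1 / sinh x ^ 2)) x := by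
  refine ((hasDerivAt_cosh x).div (hasDerivAt_sinh x) hx).congr_deriv ?_
  rw [← cosh_sq_sub_sinh_sq x]
  ring

theorem hasDerivAt_one_div_cosh_sq (x : ℝ) :
    HasDerivAt (fun s => 1 / cosh s ^ 2) (-2 * sinh x / cosh x ^ 3) x := by
  have hc : cosh x ≠ 0 := (cosh_pos x).ne'
  refine ((hasDerivAt_const x (1 : ℝ)).div ((hasDerivAt_cosh x).fun_pow 2)
    (pow_ne_zero 2 hc)).congr_deriv ?_
  field_simp
  ring

theorem hasDerivAt_one_div_sinh_sq {x : ℝ} (hx : sinh x ≠ 0) :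
    HasDerivAt (fun s => 1 / sinh s ^ 2) (-2 * cosh x / sinh x ^ 3) x := by
  refine ((hasDerivAt_const x (1 : ℝ)).div ((hasDerivAt_sinh x).fun_pow 2)
    (pow_ne_zero 2 hx)).congr_deriv ?_
  field_simp
  ring

end Real

section CothAddMulTanh

variable (k : ℝ) {x : ℝ}

theorem hasDerivAt_coth_add_mul_tanh (hx : sinh x ≠ 0) :
    HasDerivAt (fun s => cosh s / sinh s + k * tanh s) (k / cosh x ^ 2 - 1 / sinh x ^ 2) x := by
  refine ((hasDerivAt_cosh_div_sinh hx).add ((hasDerivAt_tanh x).const_mul k)).congr_deriv ?_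
  ring

theorem hasDerivAt_div_cosh_sq_sub_one_div_sinh_sq (hx : sinh x ≠ 0) :
    HasDerivAt (fun s => k / cosh s ^ 2 - 1 / sinh s ^ 2)
      (2 * cosh x / sinh x ^ 3 - 2 * k * sinh x / cosh x ^ 3) x := by
  have h := ((hasDerivAt_one_div_cosh_sq x).const_mul k).sub (hasDerivAt_one_div_sinh_sq hx)
  simp only [mul_one_div] at h
  refine h.congr_deriv ?_
  ring

theorem deriv_coth_add_mul_tanh (hx : x ≠ 0) :
    deriv (fun s => cosh s / sinh s + k * tanh s) x = k / cosh x ^ 2 - 1 / sinh x ^ 2 :=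
  (hasDerivAt_coth_add_mul_tanh k (sinh_ne_zero.2 hx)).deriv

theorem deriv_deriv_coth_add_mul_tanh (hx : x ≠ 0) :
    deriv (deriv fun s => cosh s / sinh s + k * tanh s) x
      = 2 * cosh x / sinh x ^ 3 - 2 * k * sinh x / cosh x ^ 3 := by
  have h : deriv (fun s => cosh s / sinh s + k * tanh s)
      =ᶠ[nhds x] fun s => k / cosh s ^ 2 - 1 / sinh s ^ 2 := by
    filter_upwards [eventually_ne_nhds hx] with s hs
    exact deriv_coth_add_mul_tanh k hs
  rw [h.deriv_eq]
  exact (hasDerivAt_div_cosh_sq_sub_one_div_sinh_sq k (sinh_ne_zero.2 hx)).deriv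

theorem coth_add_mul_tanh_mul_second_deriv (hx : sinh x ≠ 0) :
    (cosh x / sinh x + k * tanh x) * (2 * cosh x / sinh x ^ 3 - 2 * k * sinh x / cosh x ^ 3)
      = 2 * (1 / sinh x ^ 2 + k / cosh x ^ 2) * (1 / sinh x ^ 2 + k / cosh x ^ 2 + (1 - k)) := by
  have hc : cosh x ≠ 0 := (cosh_pos x).ne'
  rw [tanh_eq_sinh_div_cosh]
  field_simp
  linear_combination (cosh x ^ 2 + sinh x ^ 2 * k) ^ 2 * cosh_sq_sub_sinh_sq x

end CothAddMulTanh

theorem stmt_6 (k : ℝ) (hk : k ∈ Set.Icc (0:ℝ) 1) :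
    ∀ r > (0:ℝ),
      2 * (deriv (fun s => Real.cosh s / Real.sinh s + k * Real.tanh s) r) ^ 2
        ≤ 2 * (1 / Real.sinh r ^ 2 + k / Real.cosh r ^ 2) ^ 2
      ∧ 2 * (1 / Real.sinh r ^ 2 + k / Real.cosh r ^ 2) ^ 2
        ≤ (Real.cosh r / Real.sinh r + k * Real.tanh r)
          * deriv (deriv (fun s => Real.cosh s / Real.sinh s + k * Real.tanh s)) r := by
  obtain ⟨hk0, hk1⟩ := hk
  intro r hr
  have ha : 0 ≤ 1 / sinh r ^ 2 := by positivity
  have hb : 0 ≤ k / cosh r ^ 2 := by positivity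
  rw [deriv_coth_add_mul_tanh k hr.ne', deriv_deriv_coth_add_mul_tanh k hr.ne',
    coth_add_mul_tanh_mul_second_deriv k (sinh_pos_iff.2 hr).ne']
  constructor
  · gcongr 2 * ?_
    exact sq_le_sq' (by linarith) (by linarith)
  · nlinarith [mul_nonneg (add_nonneg ha hb) (sub_nonneg.2 hk1)]
end

section
/- Let m ≥ 2 be an integer and let v : (0,∞) → (0,∞) be twice differentiable with v'(r) > 0 for all r > 0 and v''(r) = (m−1)h(r)v'(r), where h : (0,∞) → ℝ satisfies h(r) → h₀ as r → ∞ for some h₀ ≥ 0. Then ln(v(r))/r → (m−1)h₀ as r → ∞. -/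
/-!
The derivative of `log v'` is `v'' / v' = (m - 1) h`, which tends to `L = (m - 1) h₀`; a function
whose derivative tends to `L` grows like `L r + o(r)`, so `log v'(r) / r → L`. This passes to `v`:
for `c > L` (hence `c > 0`, which is where `h₀ ≥ 0` enters) the bound `v' ≤ e^{c r}` integrates to
`v ≤ K e^{c r}`, and for `c < L` the bound `v' ≥ e^{c r}` gives, by the mean value theorem,
`v(r) ≥ v(r) - v(r - 1) = v'(ξ) ≥ e^{c r - |c|}`.
-/

open Filter Topology Real

lemma exists_eventually_le_mul_add_of_deriv_le {f f' : ℝ → ℝ} {c : ℝ}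
    (hf : ∀ᶠ x in atTop, HasDerivAt f (f' x) x) (hf' : ∀ᶠ x in atTop, f' x ≤ c) :
    ∃ K, ∀ᶠ x in atTop, f x ≤ c * x + K := by
  obtain ⟨R, hR⟩ := (hf.and hf').exists_forall_of_atTop
  refine ⟨f R - c * R, eventually_atTop.2 ⟨R, fun x hx => ?_⟩⟩
  rcases hx.eq_or_lt with rfl | hRx
  · simp
  obtain ⟨ξ, hξ, hslope⟩ := exists_hasDerivAt_eq_slope f f' hRx
    (fun y hy => (hR y hy.1).1.continuousAt.continuousWithinAt)
    (fun y hy => (hR y hy.1.le).1)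
  have hξc : (f x - f R) / (x - R) ≤ c := hslope ▸ (hR ξ hξ.1.le).2
  rw [div_le_iff₀ (sub_pos.2 hRx)] at hξc
  linarith

lemma exists_eventually_mul_add_le_of_le_deriv {f f' : ℝ → ℝ} {c : ℝ}
    (hf : ∀ᶠ x in atTop, HasDerivAt f (f' x) x) (hf' : ∀ᶠ x in atTop, c ≤ f' x) :
    ∃ K, ∀ᶠ x in atTop, c * x + K ≤ f x := by
  obtain ⟨K, hK⟩ := exists_eventually_le_mul_add_of_deriv_le (f := -f) (f' := -f') (c := -c)
    (hf.mono fun x hx => hx.neg) (hf'.mono fun x hx => neg_le_neg hx)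
  exact ⟨-K, hK.mono fun x hx => by simp only [Pi.neg_apply] at hx; linarith⟩

lemma tendsto_div_atTop_of_affine_bounds {u : ℝ → ℝ} {L : ℝ}
    (hup : ∀ c > L, ∃ K, ∀ᶠ r in atTop, u r ≤ c * r + K)
    (hlo : ∀ c < L, ∃ K, ∀ᶠ r in atTop, c * r + K ≤ u r) :
    Tendsto (fun r => u r / r) atTop (𝓝 L) := by
  have hdecay (K : ℝ) : Tendsto (fun r => K / r) atTop (𝓝 0) :=
    tendsto_const_nhds.div_atTop tendsto_id
  refine tendsto_order.2 ⟨fun a ha => ?_, fun a ha => ?_⟩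
  · obtain ⟨K, hK⟩ := hlo ((a + L) / 2) (by linarith)
    filter_upwards [hK, eventually_gt_atTop 0,
      (hdecay K).eventually (lt_mem_nhds (by linarith : a - (a + L) / 2 < 0))] with r hr hr0 hKr
    rw [lt_div_iff₀ hr0] at hKr ⊢
    linarith
  · obtain ⟨K, hK⟩ := hup ((a + L) / 2) (by linarith)
    filter_upwards [hK, eventually_gt_atTop 0,
      (hdecay K).eventually (gt_mem_nhds (by linarith : 0 < a - (a + L) / 2))] with r hr hr0 hKr
    rw [div_lt_iff₀ hr0] at hKr ⊢
    linarith

theorem tendsto_div_self_of_tendsto_deriv {f f' : ℝ → ℝ} {L : ℝ}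
    (hf : ∀ᶠ x in atTop, HasDerivAt f (f' x) x) (hf' : Tendsto f' atTop (𝓝 L)) :
    Tendsto (fun x => f x / x) atTop (𝓝 L) :=
  tendsto_div_atTop_of_affine_bounds
    (fun _ hc => exists_eventually_le_mul_add_of_deriv_le hf (hf'.eventually (ge_mem_nhds hc)))
    (fun _ hc => exists_eventually_mul_add_le_of_le_deriv hf (hf'.eventually (le_mem_nhds hc)))

lemma exists_eventually_log_le_of_deriv_le_exp {v v' : ℝ → ℝ} {c : ℝ} (hc : 0 < c)
    (hv : ∀ᶠ r in atTop, HasDerivAt v (v' r) r) (hvpos : ∀ᶠ r in atTop, 0 < v r)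
    (hv' : ∀ᶠ r in atTop, v' r ≤ exp (c * r)) :
    ∃ K, ∀ᶠ r in atTop, log (v r) ≤ c * r + K := by
  have hexp (r : ℝ) : HasDerivAt (fun s => exp (c * s) / c) (exp (c * r)) r := by
    simpa [hc.ne'] using ((hasDerivAt_id r).const_mul c).exp.div_const c
  obtain ⟨K, hK⟩ := exists_eventually_le_mul_add_of_deriv_le (c := 0)
    (hv.mono fun r hr => hr.sub (hexp r)) (hv'.mono fun r hr => sub_nonpos.2 hr)
  refine ⟨log (c⁻¹ + |K|), ?_⟩
  filter_upwards [hK, hvpos, eventually_ge_atTop 0] with r hr hvr hr0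
  have hexp_ge : 1 ≤ exp (c * r) := one_le_exp (by positivity)
  have hbound : v r ≤ (c⁻¹ + |K|) * exp (c * r) := by
    rw [Pi.sub_apply, zero_mul, zero_add, div_eq_mul_inv] at hr
    nlinarith [le_abs_self K, mul_le_mul_of_nonneg_left hexp_ge (abs_nonneg K)]
  calc log (v r) ≤ log ((c⁻¹ + |K|) * exp (c * r)) := log_le_log hvr hbound
    _ = c * r + log (c⁻¹ + |K|) := by
      rw [log_mul (by positivity) (exp_pos _).ne', log_exp, add_comm]

lemma exists_eventually_le_log_of_exp_le_deriv {v v' : ℝ → ℝ} {c : ℝ}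
    (hv : ∀ᶠ r in atTop, HasDerivAt v (v' r) r) (hvnonneg : ∀ᶠ r in atTop, 0 ≤ v r)
    (hv' : ∀ᶠ r in atTop, exp (c * r) ≤ v' r) :
    ∃ K, ∀ᶠ r in atTop, c * r + K ≤ log (v r) := by
  obtain ⟨R, hR⟩ := (hv.and (hvnonneg.and hv')).exists_forall_of_atTop
  refine ⟨-|c|, eventually_atTop.2 ⟨R + 1, fun r hr => ?_⟩⟩
  obtain ⟨ξ, hξ, hslope⟩ := exists_hasDerivAt_eq_slope v v' (sub_one_lt r)
    (fun y hy => (hR y (by linarith [hy.1])).1.continuousAt.continuousWithinAt)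
    (fun y hy => (hR y (by linarith [hy.1])).1)
  rw [sub_sub_cancel, div_one] at hslope
  have hshift : c * r - |c| ≤ c * ξ := by
    cases abs_cases c <;> nlinarith [hξ.1, hξ.2]
  have hv_lower : exp (c * r - |c|) ≤ v r := calc
    exp (c * r - |c|) ≤ exp (c * ξ) := exp_le_exp.2 hshift
    _ ≤ v' ξ := (hR ξ (by linarith [hξ.1])).2.2
    _ ≤ v r := by linarith [(hR (r - 1) (by linarith)).2.1]
  rw [← sub_eq_add_neg, le_log_iff_exp_le ((exp_pos _).trans_le hv_lower)]
  exact hv_lower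

theorem stmt_9 (m : ℕ) (hm : 2 ≤ m) (v v' v'' h : ℝ → ℝ) (h₀ : ℝ)
    (hvpos : ∀ r > (0:ℝ), 0 < v r)
    (hv'pos : ∀ r > (0:ℝ), 0 < v' r)
    (hv : ∀ r > (0:ℝ), HasDerivAt v (v' r) r)
    (hv' : ∀ r > (0:ℝ), HasDerivAt v' (v'' r) r)
    (hode : ∀ r > (0:ℝ), v'' r = ((m:ℝ) - 1) * h r * v' r)
    (hlim : Filter.Tendsto h Filter.atTop (nhds h₀))
    (hh₀ : 0 ≤ h₀) :
    Filter.Tendsto (fun r => Real.log (v r) / r) Filter.atTop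
      (nhds (((m:ℝ) - 1) * h₀)) := by
  have hL : 0 ≤ ((m:ℝ) - 1) * h₀ :=
    mul_nonneg (by linarith [show (2:ℝ) ≤ m by exact_mod_cast hm]) hh₀
  have hpos : ∀ᶠ r : ℝ in atTop, 0 < r := eventually_gt_atTop 0
  have hv_ev : ∀ᶠ r in atTop, HasDerivAt v (v' r) r := hpos.mono hv
  have hlog_v' : Tendsto (fun r => log (v' r) / r) atTop (𝓝 (((m:ℝ) - 1) * h₀)) := by
    refine tendsto_div_self_of_tendsto_deriv (hpos.mono fun r hr => ?_) (hlim.const_mul _)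
    convert (hv' r hr).log (hv'pos r hr).ne' using 1
    rw [hode r hr, mul_div_cancel_right₀ _ (hv'pos r hr).ne']
  refine tendsto_div_atTop_of_affine_bounds (fun c hc => ?_) (fun c hc => ?_)
  · refine exists_eventually_log_le_of_deriv_le_exp (hL.trans_lt hc) hv_ev (hpos.mono hvpos) ?_
    filter_upwards [hlog_v'.eventually (gt_mem_nhds hc), hpos] with r hr hr0
    rw [div_lt_iff₀ hr0, log_lt_iff_lt_exp (hv'pos r hr0)] at hr
    exact hr.le
  · refine exists_eventually_le_log_of_exp_le_deriv hv_ev (hpos.mono fun r hr => (hvpos r hr).le) ?_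
    filter_upwards [hlog_v'.eventually (lt_mem_nhds hc), hpos] with r hr hr0
    rw [lt_div_iff₀ hr0, lt_log_iff_exp_lt (hv'pos r hr0)] at hr
    exact hr.le
end

section
/- Let m ≥ 2 be an integer, let T ∈ (0,∞], and let θ : (0,T) → (0,∞) be twice continuously differentiable and integrable near 0, such that h(t) := θ'(t)/((m−1)θ(t)) satisfies h'(t) < 0 for all t ∈ (0,T). Define v(t) = ∫₀^t θ(s) ds and a(t) = v(t)/θ(t), and let L = sup_{t∈(0,T)} v(t). Then v is a strictly increasing bijection from (0,T) onto (0,L), the function g : (0,L) → ℝ defined by g(s) = s·a(v⁻¹(s)) is twice differentiable with g''(s) = (2a'(t)² − (m−1)a(t)²h'(t))/θ(t) > 0 at t = v⁻¹(s), and in particular g is strictly convex on (0,L). -/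
/-!
Since `v' = θ > 0`, `v` is a strictly increasing bijection of `(0, T)` onto `(0, L)`, and its
inverse `w` satisfies `w' = 1 / θ ∘ w`. With `c = m - 1` and `h = θ' / (c θ)`, the quotient
`a = v / θ` solves the linear equation `a' = 1 - c a h`. As `v = a θ`, the function
`g(s) = s a(w s)` has `g' = φ ∘ w` with `φ = a (1 + a') = a (2 - c a h)`, so `g'' = φ' ∘ w / θ ∘ w`,
and differentiating `a (2 - c a h)` with the same equation gives `φ' = 2 a'² - c a² h'`, which is
positive because `h' < 0`.
-/

open Set MeasureTheory Filter Function Topology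

section PosLtEReal

variable (T : EReal)

theorem isOpen_setOf_pos_lt_ereal : IsOpen {t : ℝ | 0 < t ∧ (t : EReal) < T} :=
  (isOpen_lt continuous_const continuous_id).inter (isOpen_Iio.preimage continuous_coe_real_ereal)

theorem Ioc_subset_setOf_pos_lt_ereal {t : ℝ} (ht : (t : EReal) < T) :
    Ioc 0 t ⊆ {s : ℝ | 0 < s ∧ (s : EReal) < T} :=
  fun _ hs => ⟨hs.1, (EReal.coe_le_coe_iff.2 hs.2).trans_lt ht⟩

theorem ordConnected_setOf_pos_lt_ereal : OrdConnected {t : ℝ | 0 < t ∧ (t : EReal) < T} :=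
  ⟨fun _ hx _ hy _ hz => Ioc_subset_setOf_pos_lt_ereal T hy.2 ⟨hx.1.trans_le hz.1, hz.2⟩⟩

end PosLtEReal

theorem image_setOf_pos_lt_ereal {f : ℝ → ℝ} {T : EReal}
    (hcont : ContinuousOn f {t : ℝ | 0 < t ∧ (t : EReal) < T})
    (hmono : StrictMonoOn f {t : ℝ | 0 < t ∧ (t : EReal) < T})
    (hpos : ∀ t ∈ {t : ℝ | 0 < t ∧ (t : EReal) < T}, 0 < f t)
    (hlim : Tendsto f (𝓝[>] 0) (𝓝 0)) :
    f '' {t : ℝ | 0 < t ∧ (t : EReal) < T} =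
      {y : ℝ | 0 < y ∧ (y : EReal) < ⨆ t ∈ {t : ℝ | 0 < t ∧ (t : EReal) < T}, (f t : EReal)} := by
  ext y
  constructor
  · rintro ⟨t, ht, rfl⟩
    obtain ⟨t', htt', ht'T⟩ := EReal.lt_iff_exists_real_btwn.1 ht.2
    have ht' : 0 < t' ∧ (t' : EReal) < T := ⟨ht.1.trans (EReal.coe_lt_coe_iff.1 htt'), ht'T⟩
    refine ⟨hpos t ht, lt_of_lt_of_le ?_ (le_iSup₂ (f := fun t _ => (f t : EReal)) t' ht')⟩
    exact EReal.coe_lt_coe_iff.2 (hmono ht ht' (EReal.coe_lt_coe_iff.1 htt'))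
  · rintro ⟨hy, hyL⟩
    obtain ⟨t₂, ht₂, hyt₂⟩ := lt_biSup_iff.1 hyL
    obtain ⟨t₁, hft₁, ht₁⟩ :=
      ((hlim.eventually (gt_mem_nhds hy)).and (Ioo_mem_nhdsGT ht₂.1)).exists
    have hsub : Icc t₁ t₂ ⊆ {t : ℝ | 0 < t ∧ (t : EReal) < T} :=
      (ordConnected_setOf_pos_lt_ereal T).out
        (Ioc_subset_setOf_pos_lt_ereal T ht₂.2 ⟨ht₁.1, ht₁.2.le⟩) ht₂
    obtain ⟨t, ht, rfl⟩ := intermediate_value_Icc ht₁.2.le (hcont.mono hsub)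
      ⟨hft₁.le, (EReal.coe_lt_coe_iff.1 hyt₂).le⟩
    exact ⟨t, hsub ht, rfl⟩

section Primitive

variable {θ : ℝ → ℝ} {ε : ℝ}

theorem intervalIntegrable_zero_of_integrableOn_Ioc (hε : 0 < ε) (hθε : IntegrableOn θ (Ioc 0 ε))
    {t : ℝ} (ht : 0 ≤ t) (hθ : ContinuousOn θ (Ioc 0 t)) : IntervalIntegrable θ volume 0 t := by
  rcases le_total t ε with htε | hεt
  · exact (intervalIntegrable_iff_integrableOn_Ioc_of_le ht).2
      (hθε.mono_set (Ioc_subset_Ioc_right htε))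
  · exact ((intervalIntegrable_iff_integrableOn_Ioc_of_le hε.le).2 hθε).trans
      ((hθ.mono fun _ hs => ⟨hε.trans_le hs.1, hs.2⟩).intervalIntegrable_of_Icc hεt)

theorem tendsto_integral_nhdsGT_zero (hε : 0 < ε) (hθε : IntegrableOn θ (Ioc 0 ε)) :
    Tendsto (fun t => ∫ s in (0:ℝ)..t, θ s) (𝓝[>] 0) (𝓝 0) := by
  have hcont := intervalIntegral.continuousOn_primitive_interval'
    ((intervalIntegrable_iff_integrableOn_Ioc_of_le hε.le).2 hθε) left_mem_uIcc
  have h0 := (hcont 0 left_mem_uIcc).mono_of_mem_nhdsWithin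
    (mem_of_superset (Ioc_mem_nhdsGT hε) (by rw [uIcc_of_le hε.le]; exact Ioc_subset_Icc_self))
  simpa using h0.tendsto

variable {T : EReal}

theorem intervalIntegrable_zero_of_mem_setOf_pos_lt_ereal (hε : 0 < ε)
    (hθε : IntegrableOn θ (Ioc 0 ε)) (hθ : ContinuousOn θ {t : ℝ | 0 < t ∧ (t : EReal) < T})
    {t : ℝ} (ht : t ∈ {t : ℝ | 0 < t ∧ (t : EReal) < T}) : IntervalIntegrable θ volume 0 t :=
  intervalIntegrable_zero_of_integrableOn_Ioc hε hθε ht.1.le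
    (hθ.mono (Ioc_subset_setOf_pos_lt_ereal T ht.2))

theorem hasDerivAt_integral_of_mem_setOf_pos_lt_ereal (hε : 0 < ε)
    (hθε : IntegrableOn θ (Ioc 0 ε)) (hθ : ContinuousOn θ {t : ℝ | 0 < t ∧ (t : EReal) < T})
    {t : ℝ} (ht : t ∈ {t : ℝ | 0 < t ∧ (t : EReal) < T}) :
    HasDerivAt (fun u => ∫ s in (0:ℝ)..u, θ s) (θ t) t :=
  have hnhds := (isOpen_setOf_pos_lt_ereal T).mem_nhds ht
  intervalIntegral.integral_hasDerivAt_right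
    (intervalIntegrable_zero_of_mem_setOf_pos_lt_ereal hε hθε hθ ht)
    (hθ.stronglyMeasurableAtFilter (isOpen_setOf_pos_lt_ereal T) t ht) (hθ.continuousAt hnhds)

theorem strictMonoOn_integral_setOf_pos_lt_ereal (hε : 0 < ε) (hθε : IntegrableOn θ (Ioc 0 ε))
    (hθ : ContinuousOn θ {t : ℝ | 0 < t ∧ (t : EReal) < T})
    (hθpos : ∀ t ∈ {t : ℝ | 0 < t ∧ (t : EReal) < T}, 0 < θ t) :
    StrictMonoOn (fun u => ∫ s in (0:ℝ)..u, θ s) {t : ℝ | 0 < t ∧ (t : EReal) < T} :=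
  strictMonoOn_of_hasDerivWithinAt_pos (ordConnected_setOf_pos_lt_ereal T).convex
    (fun _ ht => (hasDerivAt_integral_of_mem_setOf_pos_lt_ereal hε hθε hθ
      ht).continuousAt.continuousWithinAt)
    (fun _ ht => (hasDerivAt_integral_of_mem_setOf_pos_lt_ereal hε hθε hθ
      (interior_subset ht)).hasDerivWithinAt)
    (fun t ht => hθpos t (interior_subset ht))

theorem image_integral_setOf_pos_lt_ereal (hε : 0 < ε) (hθε : IntegrableOn θ (Ioc 0 ε))
    (hθ : ContinuousOn θ {t : ℝ | 0 < t ∧ (t : EReal) < T})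
    (hθpos : ∀ t ∈ {t : ℝ | 0 < t ∧ (t : EReal) < T}, 0 < θ t) :
    (fun u => ∫ s in (0:ℝ)..u, θ s) '' {t : ℝ | 0 < t ∧ (t : EReal) < T} =
      {y : ℝ | 0 < y ∧ (y : EReal) <
        ⨆ t ∈ {t : ℝ | 0 < t ∧ (t : EReal) < T}, ((∫ s in (0:ℝ)..t, θ s : ℝ) : EReal)} :=
  image_setOf_pos_lt_ereal
    (fun _ ht => (hasDerivAt_integral_of_mem_setOf_pos_lt_ereal hε hθε hθ
      ht).continuousAt.continuousWithinAt)
    (strictMonoOn_integral_setOf_pos_lt_ereal hε hθε hθ hθpos)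
    (fun _ ht => intervalIntegral.intervalIntegral_pos_of_pos_on
      (intervalIntegrable_zero_of_mem_setOf_pos_lt_ereal hε hθε hθ ht)
      (fun s hs => hθpos s (Ioc_subset_setOf_pos_lt_ereal T ht.2 (Ioo_subset_Ioc_self hs))) ht.1)
    (tendsto_integral_nhdsGT_zero hε hθε)

end Primitive

theorem hasDerivAt_primitive_div {v θ : ℝ → ℝ} {c t : ℝ} (hc : c ≠ 0)
    (hv : HasDerivAt v (θ t) t) (hθ : DifferentiableAt ℝ θ t) (hθt : θ t ≠ 0) :
    HasDerivAt (fun s => v s / θ s) (1 - c * (v t / θ t) * (deriv θ t / (c * θ t))) t := by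
  refine (hv.div hθ.hasDerivAt hθt).congr_deriv ?_
  field_simp

theorem hasDerivAt_mul_one_add_deriv {a h : ℝ → ℝ} {S : Set ℝ} {c h' t : ℝ} (hS : S ∈ 𝓝 t)
    (ha : ∀ s ∈ S, HasDerivAt a (1 - c * a s * h s) s) (hh : HasDerivAt h h' t) :
    HasDerivAt (fun s => a s * (1 + deriv a s)) (2 * deriv a t ^ 2 - c * a t ^ 2 * h') t := by
  have hat := ha t (mem_of_mem_nhds hS)
  have hφ : HasDerivAt (fun s => a s * (2 - c * a s * h s))
      ((1 - c * a t * h t) * (2 - c * a t * h t)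
        + a t * -(c * (1 - c * a t * h t) * h t + c * a t * h')) t :=
    hat.mul (((hat.const_mul c).mul hh).const_sub 2)
  rw [hat.deriv]
  refine (hφ.congr_of_eventuallyEq ?_).congr_deriv (by ring)
  filter_upwards [hS] with s hs
  rw [(ha s hs).deriv]
  ring

theorem StrictMonoOn.hasDerivAt_invFunOn {f : ℝ → ℝ} {s : Set ℝ} {f' x : ℝ}
    (hf : StrictMonoOn f s) (hs : s ∈ 𝓝 x) (hfs : f '' s ∈ 𝓝 (f x)) (hd : HasDerivAt f f' x)
    (hf' : f' ≠ 0) : HasDerivAt (invFunOn f s) f'⁻¹ (f x) := by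
  have hx : invFunOn f s (f x) = x := hf.injOn.leftInvOn_invFunOn (mem_of_mem_nhds hs)
  have hmono : MonotoneOn (invFunOn f s) (f '' s) := by
    rintro _ ⟨y, hy, rfl⟩ _ ⟨z, hz, rfl⟩ hyz
    rw [hf.injOn.leftInvOn_invFunOn hy, hf.injOn.leftInvOn_invFunOn hz]
    exact (hf.le_iff_le hy hz).1 hyz
  have hcont : ContinuousAt (invFunOn f s) (f x) :=
    continuousAt_of_monotoneOn_of_image_mem_nhds hmono hfs
      (by rwa [hf.injOn.invFunOn_image subset_rfl, hx])
  refine HasDerivAt.of_local_left_inverse hcont (hx ▸ hd) hf' ?_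
  filter_upwards [hfs] with y hy using invFunOn_eq hy

theorem StrictMonoOn.hasDerivAt_id_mul_comp_invFunOn {S : Set ℝ} {v a : ℝ → ℝ} {k a' t : ℝ}
    (hv : StrictMonoOn v S) (hS : S ∈ 𝓝 t) (hvS : v '' S ∈ 𝓝 (v t)) (hvd : HasDerivAt v k t)
    (hk : k ≠ 0) (ha : HasDerivAt a a' t) (hak : a t * k = v t) :
    HasDerivAt (fun y => y * a (invFunOn v S y)) (a t * (1 + a')) (v t) := by
  have hx : invFunOn v S (v t) = t := hv.injOn.leftInvOn_invFunOn (mem_of_mem_nhds hS)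
  have hcomp : HasDerivAt (fun y => a (invFunOn v S y)) (a' * k⁻¹) (v t) :=
    (hx.symm ▸ ha : HasDerivAt a a' (invFunOn v S (v t))).comp (v t)
      (hv.hasDerivAt_invFunOn hS hvS hvd hk)
  refine ((hasDerivAt_id (v t)).mul hcomp).congr_deriv ?_
  rw [id, hx, ← hak]
  field_simp

theorem StrictMonoOn.hasDerivAt_deriv_id_mul_comp_invFunOn {S : Set ℝ} {v θ a : ℝ → ℝ}
    {φ' t : ℝ} (hv : StrictMonoOn v S) (hS : IsOpen S) (hvS : IsOpen (v '' S))
    (hvd : ∀ s ∈ S, HasDerivAt v (θ s) s) (hθ : ∀ s ∈ S, θ s ≠ 0)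
    (ha : ∀ s ∈ S, DifferentiableAt ℝ a s) (haθ : ∀ s ∈ S, a s * θ s = v s) (ht : t ∈ S)
    (hφ : HasDerivAt (fun s => a s * (1 + deriv a s)) φ' t) :
    HasDerivAt (deriv fun y => y * a (invFunOn v S y)) (φ' / θ t) (v t) := by
  have hx : invFunOn v S (v t) = t := hv.injOn.leftInvOn_invFunOn ht
  have hcomp : HasDerivAt (fun y => (fun s => a s * (1 + deriv a s)) (invFunOn v S y))
      (φ' * (θ t)⁻¹) (v t) :=
    (hx.symm ▸ hφ).comp (v t) (hv.hasDerivAt_invFunOn (hS.mem_nhds ht)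
      (hvS.mem_nhds (mem_image_of_mem v ht)) (hvd t ht) (hθ t ht))
  rw [div_eq_mul_inv]
  refine hcomp.congr_of_eventuallyEq ?_
  filter_upwards [hvS.mem_nhds (mem_image_of_mem v ht)] with y ⟨s, hs, hsy⟩
  subst hsy
  rw [hv.injOn.leftInvOn_invFunOn hs]
  exact (hv.hasDerivAt_id_mul_comp_invFunOn (hS.mem_nhds hs)
    (hvS.mem_nhds (mem_image_of_mem v hs)) (hvd s hs) (hθ s hs) (ha s hs).hasDerivAt
    (haθ s hs)).deriv

theorem hasDerivAt_id_mul_div_comp_invFunOn {S : Set ℝ} {θ v a : ℝ → ℝ} {c t : ℝ} (hc : c ≠ 0)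
    (hv : StrictMonoOn v S) (hS : IsOpen S) (hvS : IsOpen (v '' S))
    (hvd : ∀ s ∈ S, HasDerivAt v (θ s) s) (hθ : ∀ s ∈ S, θ s ≠ 0) (hθC2 : ContDiffOn ℝ 2 θ S)
    (ha : ∀ s, a s = v s / θ s) (ht : t ∈ S) :
    HasDerivAt (fun y => y * a (invFunOn v S y)) (a t * (1 + deriv a t)) (v t) ∧
      HasDerivAt (deriv fun y => y * a (invFunOn v S y))
        ((2 * deriv a t ^ 2 - c * a t ^ 2 * deriv (fun s => deriv θ s / (c * θ s)) t) / θ t)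
        (v t) := by
  obtain rfl : a = fun s => v s / θ s := funext ha
  have hθd : ∀ s ∈ S, DifferentiableAt ℝ θ s := fun s hs =>
    (hθC2.differentiableOn two_ne_zero s hs).differentiableAt (hS.mem_nhds hs)
  have hθ'd : DifferentiableAt ℝ (deriv θ) t :=
    ((hθC2.deriv_of_isOpen hS (m := 1) le_rfl).differentiableOn one_ne_zero t
      ht).differentiableAt (hS.mem_nhds ht)
  have ha' : ∀ s ∈ S, HasDerivAt (fun s => v s / θ s)
      (1 - c * (v s / θ s) * (deriv θ s / (c * θ s))) s := fun s hs =>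
    hasDerivAt_primitive_div hc (hvd s hs) (hθd s hs) (hθ s hs)
  have hh : DifferentiableAt ℝ (fun s => deriv θ s / (c * θ s)) t :=
    hθ'd.div ((differentiableAt_const c).mul (hθd t ht)) (mul_ne_zero hc (hθ t ht))
  have haθ : ∀ s ∈ S, v s / θ s * θ s = v s := fun s hs => div_mul_cancel₀ _ (hθ s hs)
  exact ⟨hv.hasDerivAt_id_mul_comp_invFunOn (hS.mem_nhds ht)
      (hvS.mem_nhds (mem_image_of_mem v ht)) (hvd t ht) (hθ t ht)
      (ha' t ht).differentiableAt.hasDerivAt (haθ t ht),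
    hv.hasDerivAt_deriv_id_mul_comp_invFunOn hS hvS hvd hθ
      (fun s hs => (ha' s hs).differentiableAt) haθ ht
      (hasDerivAt_mul_one_add_deriv (hS.mem_nhds ht) ha' hh.hasDerivAt)⟩

theorem stmt_10_general (m : ℕ) (hm : 2 ≤ m) (T : EReal)
    (S : Set ℝ) (hS : S = {t : ℝ | 0 < t ∧ (t : EReal) < T})
    (θ v a g : ℝ → ℝ) (L : EReal)
    (hθpos : ∀ t ∈ S, 0 < θ t)
    (hθC2 : ContDiffOn ℝ 2 θ S)
    (hθint : ∃ ε > (0:ℝ), IntegrableOn θ (Ioc 0 ε))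
    (hh' : ∀ t ∈ S, deriv (fun s => deriv θ s / (((m:ℝ) - 1) * θ s)) t < 0)
    (hv : ∀ t, v t = ∫ s in (0:ℝ)..t, θ s)
    (ha : ∀ t, a t = v t / θ t)
    (hL : L = ⨆ t ∈ S, (v t : EReal))
    (hg : ∀ y, g y = y * a (Function.invFunOn v S y)) :
    StrictMonoOn v S ∧
    v '' S = {y : ℝ | 0 < y ∧ (y : EReal) < L} ∧
    (∀ y : ℝ, 0 < y → (y : EReal) < L →
      ∃ t ∈ S, v t = y ∧
        DifferentiableAt ℝ g y ∧ DifferentiableAt ℝ (deriv g) y ∧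
        deriv (deriv g) y =
          (2 * (deriv a t) ^ 2
            - ((m:ℝ) - 1) * (a t) ^ 2
              * deriv (fun s => deriv θ s / (((m:ℝ) - 1) * θ s)) t) / θ t ∧
        0 < deriv (deriv g) y) ∧
    StrictConvexOn ℝ {y : ℝ | 0 < y ∧ (y : EReal) < L} g := by
  have hm1 : (0:ℝ) < m - 1 := by
    have : (2:ℝ) ≤ m := by exact_mod_cast hm
    linarith
  obtain ⟨ε, hε, hθε⟩ := hθint
  obtain rfl : g = fun y => y * a (invFunOn v S y) := funext hg
  subst hS
  set S := {t : ℝ | 0 < t ∧ (t : EReal) < T}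
  have hθc : ContinuousOn θ S := hθC2.continuousOn
  have hv' : v = fun t => ∫ s in (0:ℝ)..t, θ s := funext hv
  have hvd : ∀ t ∈ S, HasDerivAt v (θ t) t := fun t ht =>
    hv' ▸ hasDerivAt_integral_of_mem_setOf_pos_lt_ereal hε hθε hθc ht
  have hmono : StrictMonoOn v S := hv' ▸ strictMonoOn_integral_setOf_pos_lt_ereal hε hθε hθc hθpos
  have himg : v '' S = {y : ℝ | 0 < y ∧ (y : EReal) < L} := by
    rw [hL, hv']
    exact image_integral_setOf_pos_lt_ereal hε hθε hθc hθpos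
  have hgd := fun t (ht : t ∈ S) => hasDerivAt_id_mul_div_comp_invFunOn (c := (m:ℝ) - 1) hm1.ne'
    hmono (isOpen_setOf_pos_lt_ereal T) (himg ▸ isOpen_setOf_pos_lt_ereal L) hvd
    (fun t ht => (hθpos t ht).ne') hθC2 ha ht
  refine ⟨hmono, himg, (and_iff_left_of_imp fun hderiv2 => ?_).2 fun y hy hyL => ?_⟩
  · refine strictConvexOn_of_deriv2_pos (ordConnected_setOf_pos_lt_ereal L).convex
      (fun y hy => ?_) fun y hy => ?_
    · obtain ⟨t, -, -, hg', -⟩ := hderiv2 y hy.1 hy.2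
      exact hg'.continuousAt.continuousWithinAt
    · rw [(isOpen_setOf_pos_lt_ereal L).interior_eq] at hy
      obtain ⟨t, -, -, -, -, -, hpos⟩ := hderiv2 y hy.1 hy.2
      simpa using hpos
  · obtain ⟨t, ht, rfl⟩ : y ∈ v '' S := himg ▸ ⟨hy, hyL⟩
    obtain ⟨hg', hg''⟩ := hgd t ht
    have hat : 0 < a t := by rw [ha]; exact div_pos hy (hθpos t ht)
    refine ⟨t, ht, rfl, hg'.differentiableAt, hg''.differentiableAt, hg''.deriv,
      hg''.deriv ▸ div_pos (sub_pos.2 ?_) (hθpos t ht)⟩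
    exact (mul_neg_of_pos_of_neg (by positivity) (hh' t ht)).trans_le (by positivity)

theorem stmt_10 (m : ℕ) (hm : 2 ≤ m) (T : EReal) (hT : 0 < T)
    (S : Set ℝ) (hS : S = {t : ℝ | 0 < t ∧ (t : EReal) < T})
    (θ v a g : ℝ → ℝ) (L : EReal)
    (hθpos : ∀ t ∈ S, 0 < θ t)
    (hθC2 : ContDiffOn ℝ 2 θ S)
    (hθint : ∃ ε > (0:ℝ), IntegrableOn θ (Ioc 0 ε))
    (hh' : ∀ t ∈ S, deriv (fun s => deriv θ s / (((m:ℝ) - 1) * θ s)) t < 0)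
    (hv : ∀ t, v t = ∫ s in (0:ℝ)..t, θ s)
    (ha : ∀ t, a t = v t / θ t)
    (hL : L = ⨆ t ∈ S, (v t : EReal))
    (hg : ∀ y, g y = y * a (Function.invFunOn v S y)) :
    StrictMonoOn v S ∧
    v '' S = {y : ℝ | 0 < y ∧ (y : EReal) < L} ∧
    (∀ y : ℝ, 0 < y → (y : EReal) < L →
      ∃ t ∈ S, v t = y ∧
        DifferentiableAt ℝ g y ∧ DifferentiableAt ℝ (deriv g) y ∧
        deriv (deriv g) y =
          (2 * (deriv a t) ^ 2
            - ((m:ℝ) - 1) * (a t) ^ 2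
              * deriv (fun s => deriv θ s / (((m:ℝ) - 1) * θ s)) t) / θ t ∧
        0 < deriv (deriv g) y) ∧
    StrictConvexOn ℝ {y : ℝ | 0 < y ∧ (y : EReal) < L} g :=
  stmt_10_general m hm T S hS θ v a g L hθpos hθC2 hθint hh' hv ha hL hg
end

section
/- Let m ≥ 2 be an integer and define a₁ : (0,π) → ℝ by a₁(r) = m·(∫₀^r sin(t)^{m−1} dt)/sin(r)^{m−1}. Then a₁ is differentiable with a₁'(r) = m − (m−1)·(cos(r)/sin(r))·a₁(r), and for every R ∈ (π/2, π) one has (a₁'(R) − a₁'(π−R))/(a₁(R) + a₁(π−R)) = (m−1)·cos(π−R)/sin(π−R). -/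
/-!
Differentiating the quotient gives the linear ODE `a₁' = m - (m - 1) cot r · a₁`. As
`cot (π - R) = - cot R`, the constant terms cancel in `a₁'(R) - a₁'(π - R)`, leaving
`(m - 1) cot (π - R) · (a₁ R + a₁ (π - R))`, and the sum is positive because `sin > 0` on `(0, π)`.
-/

open Real

section SinPowIntegral

variable (n : ℕ)

theorem integral_sin_pow_pos_of_mem_Ioc {r : ℝ} (hr : r ∈ Set.Ioc 0 π) :
    0 < ∫ t in (0:ℝ)..r, sin t ^ n :=
  intervalIntegral.intervalIntegral_pos_of_pos_on
    ((continuous_sin.pow n).intervalIntegrable _ _)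
    (fun _ ht => pow_pos (sin_pos_of_pos_of_lt_pi ht.1 (ht.2.trans_le hr.2)) n) hr.1

theorem hasDerivAt_integral_sin_pow (r : ℝ) :
    HasDerivAt (fun x => ∫ t in (0:ℝ)..x, sin t ^ n) (sin r ^ n) r :=
  intervalIntegral.integral_hasDerivAt_right ((continuous_sin.pow n).intervalIntegrable _ _)
    ((continuous_sin.pow n).stronglyMeasurableAtFilter _ _) (continuous_sin.pow n).continuousAt

theorem hasDerivAt_sin_pow {r : ℝ} (hr : sin r ≠ 0) :
    HasDerivAt (fun x => sin x ^ n) (n * sin r ^ n * (cos r / sin r)) r := by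
  have h := (hasDerivAt_sin r).fun_pow n
  rcases n with _ | n
  · simpa using h
  · refine h.congr_deriv ?_
    rw [Nat.add_sub_cancel, pow_succ]
    field_simp

theorem hasDerivAt_mul_integral_sin_pow_div (c : ℝ) {r : ℝ} (hr : sin r ≠ 0) :
    HasDerivAt (fun x => c * (∫ t in (0:ℝ)..x, sin t ^ n) / sin x ^ n)
      (c - n * (cos r / sin r) * (c * (∫ t in (0:ℝ)..r, sin t ^ n) / sin r ^ n)) r := by
  refine (((hasDerivAt_integral_sin_pow n r).const_mul c).div (hasDerivAt_sin_pow n hr)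
    (pow_ne_zero n hr)).congr_deriv ?_
  field_simp

end SinPowIntegral

theorem deriv_sub_deriv_div_add_of_hasDerivAt_eq {a : ℝ → ℝ} (c k : ℝ)
    (ha : ∀ r ∈ Set.Ioo 0 π, HasDerivAt a (c - k * (cos r / sin r) * a r) r)
    {R : ℝ} (hR : R ∈ Set.Ioo 0 π) (hsum : a R + a (π - R) ≠ 0) :
    (deriv a R - deriv a (π - R)) / (a R + a (π - R)) = k * cos (π - R) / sin (π - R) := by
  have hR' : π - R ∈ Set.Ioo 0 π := ⟨by linarith [hR.2], by linarith [hR.1]⟩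
  have hsin : sin R ≠ 0 := (sin_pos_of_pos_of_lt_pi hR.1 hR.2).ne'
  rw [(ha R hR).deriv, (ha _ hR').deriv, cos_pi_sub, sin_pi_sub, div_eq_iff hsum]
  field_simp
  ring

theorem stmt_12 (m : ℕ) (hm : 2 ≤ m) (a₁ : ℝ → ℝ)
    (ha₁ : ∀ r, a₁ r =
      (m:ℝ) * (∫ t in (0:ℝ)..r, Real.sin t ^ (m - 1)) / Real.sin r ^ (m - 1)) :
    (∀ r ∈ Set.Ioo (0:ℝ) π,
      HasDerivAt a₁ ((m:ℝ) - ((m:ℝ) - 1) * (Real.cos r / Real.sin r) * a₁ r) r)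
    ∧ ∀ R ∈ Set.Ioo (π/2) π,
      (deriv a₁ R - deriv a₁ (π - R)) / (a₁ R + a₁ (π - R))
        = ((m:ℝ) - 1) * Real.cos (π - R) / Real.sin (π - R) := by
  have hm1 : ((m - 1 : ℕ) : ℝ) = m - 1 := by rw [Nat.cast_sub (by omega), Nat.cast_one]
  have hderiv : ∀ r ∈ Set.Ioo (0:ℝ) π,
      HasDerivAt a₁ ((m:ℝ) - ((m:ℝ) - 1) * (cos r / sin r) * a₁ r) r := fun r hr => by
    rw [funext ha₁, ← hm1]
    exact hasDerivAt_mul_integral_sin_pow_div _ _ (sin_pos_of_pos_of_lt_pi hr.1 hr.2).ne'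
  have hpos : ∀ r ∈ Set.Ioo (0:ℝ) π, 0 < a₁ r := fun r hr => by
    have hint := integral_sin_pow_pos_of_mem_Ioc (m - 1) ⟨hr.1, hr.2.le⟩
    have hsin := sin_pos_of_pos_of_lt_pi hr.1 hr.2
    rw [ha₁]
    positivity
  refine ⟨hderiv, fun R hR => ?_⟩
  have hR0 : R ∈ Set.Ioo 0 π := ⟨by linarith [pi_pos, hR.1], hR.2⟩
  have hR' : π - R ∈ Set.Ioo 0 π := ⟨by linarith [hR.2], by linarith [hR0.1]⟩
  exact deriv_sub_deriv_div_add_of_hasDerivAt_eq _ _ hderiv hR0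
    (add_pos (hpos R hR0) (hpos _ hR')).ne'
end

section
/- Let m ≥ 2 be an integer, let λ > m−1, and let a : (0,π) → ℝ be twice continuously differentiable with a''(r) + (m−1)·(cos(r)/sin(r))·a'(r) − (λ/sin(r)²)·a(r) = 0 on (0,π), and suppose a(r) = O(r²) and a'(r) = O(r) as r → 0⁺. Then for every r ∈ (0,π) the integral ∫₀^r a(t)/sin(t)² dt converges, and a'(r) = −(m−1)·(cos(r)/sin(r))·a(r) + (λ−(m−1))·∫₀^r a(t)/sin(t)² dt. -/
/-!
With `h = cot` (so `h' = -1 - h²`), the equation says exactly that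
`F = a' + (m - 1) h a` has derivative `(λ - (m - 1)) a / sin²` on `(0, π)`. Since `sin t ≍ t`
near `0`, the hypothesis `a = O(r²)` makes `a / sin²` bounded near `0⁺`, hence integrable on
`(0, r]`, and together with `a' = O(r)` it gives `F → 0` at `0⁺`. The fundamental theorem of
calculus on `(0, r]` then yields the identity.
-/

open Real Asymptotics Set Filter Topology MeasureTheory

theorem intervalIntegrable_of_continuousOn_Ioc_of_isBigO_one {E : Type*} [NormedAddCommGroup E]
    {f : ℝ → E} {a b : ℝ} (hab : a < b) (hf : ContinuousOn f (Ioc a b))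
    (hO : f =O[𝓝[>] a] fun _ => (1 : ℝ)) : IntervalIntegrable f volume a b := by
  rw [intervalIntegrable_iff_integrableOn_Ioc_of_le hab.le]
  have hOne : IntegrableAtFilter (fun _ => (1 : ℝ)) (𝓝[>] a) volume :=
    ⟨Ioo a b, Ioo_mem_nhdsGT hab, integrableOn_const measure_Ioo_lt_top.ne⟩
  have hmeas : StronglyMeasurableAtFilter f (𝓝[>] a) volume := by
    rw [← nhdsWithin_Ioc_eq_nhdsGT hab]
    exact hf.stronglyMeasurableAtFilter_nhdsWithin measurableSet_Ioc a
  obtain ⟨s, hs, hfs⟩ := hO.integrableAtFilter hmeas hOne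
  obtain ⟨u, hu, hus⟩ := mem_nhdsGT_iff_exists_Ioo_subset.mp hs
  have hcover : Ioc a b ⊆ Ioo a u ∪ Icc u b := fun x hx => by
    rcases lt_or_ge x u with h | h
    exacts [Or.inl ⟨hx.1, h⟩, Or.inr ⟨h, hx.2⟩]
  have hIcc : IntegrableOn f (Icc u b) volume :=
    (hf.mono fun x hx => ⟨lt_of_lt_of_le hu hx.1, hx.2⟩).integrableOn_Icc
  exact ((hfs.mono_set hus).union hIcc).mono_set hcover

theorem isBigO_sin_nhdsGT_zero : (fun t : ℝ => t) =O[𝓝[>] 0] sin := by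
  refine IsBigO.of_bound (π / 2) ?_
  filter_upwards [Ioo_mem_nhdsGT (half_pos pi_pos)] with t ht
  have h := mul_le_sin ht.1.le ht.2.le
  rw [norm_of_nonneg ht.1.le, norm_of_nonneg (by linarith [mul_pos (div_pos two_pos pi_pos) ht.1])]
  rw [div_mul_eq_mul_div, div_le_iff₀ pi_pos] at h
  nlinarith [pi_pos]

theorem eventually_sin_ne_zero_nhdsGT_zero : ∀ᶠ t in 𝓝[>] (0 : ℝ), sin t ≠ 0 := by
  filter_upwards [Ioo_mem_nhdsGT pi_pos] with t ht using (sin_pos_of_pos_of_lt_pi ht.1 ht.2).ne'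

theorem isBigO_div_sin_sq_one {f : ℝ → ℝ} (hf : f =O[𝓝[>] 0] fun t => t ^ 2) :
    (fun t => f t / sin t ^ 2) =O[𝓝[>] 0] fun _ => (1 : ℝ) := by
  have hsq : f =O[𝓝[>] 0] fun t => sin t ^ 2 := hf.trans (isBigO_sin_nhdsGT_zero.pow 2)
  refine (hsq.mul (isBigO_refl (fun t => (sin t ^ 2)⁻¹) _)).congr' ?_ ?_
  · filter_upwards with t using (div_eq_mul_inv _ _).symm
  · filter_upwards [eventually_sin_ne_zero_nhdsGT_zero] with t ht
    exact mul_inv_cancel₀ (pow_ne_zero 2 ht)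

theorem tendsto_cot_mul_nhdsGT_zero {f : ℝ → ℝ} (hf : f =O[𝓝[>] 0] fun t => t ^ 2) :
    Tendsto (fun t => cos t / sin t * f t) (𝓝[>] 0) (𝓝 0) := by
  have hO : (fun t => cos t / sin t * f t) =O[𝓝[>] 0] fun t => cos t * sin t := by
    refine ((isBigO_refl (fun t => cos t * sin t) _).mul (isBigO_div_sin_sq_one hf)).congr' ?_ ?_
    · filter_upwards [eventually_sin_ne_zero_nhdsGT_zero] with t ht
      field_simp
    · filter_upwards with t using mul_one _
  refine hO.trans_tendsto ?_
  simpa using ((continuous_cos.tendsto 0).mul (continuous_sin.tendsto 0)).mono_left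
    nhdsWithin_le_nhds

theorem hasDerivAt_deriv_add_mul_cot_mul {a : ℝ → ℝ} {c lam t : ℝ} (hsin : sin t ≠ 0)
    (ha : DifferentiableAt ℝ a t) (ha' : DifferentiableAt ℝ (deriv a) t)
    (hode : deriv (deriv a) t + c * (cos t / sin t) * deriv a t - lam / sin t ^ 2 * a t = 0) :
    HasDerivAt (fun s => deriv a s + c * (cos s / sin s * a s))
      ((lam - c) * (a t / sin t ^ 2)) t := by
  have hcot : HasDerivAt (fun s => cos s / sin s)
      ((-sin t * sin t - cos t * cos t) / sin t ^ 2) t :=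
    (hasDerivAt_cos t).div (hasDerivAt_sin t) hsin
  refine (ha'.hasDerivAt.add ((hcot.mul ha.hasDerivAt).const_mul c)).congr_deriv ?_
  linear_combination hode - c * a t / sin t ^ 2 * sin_sq_add_cos_sq t

theorem stmt_14_general (m : ℕ) (lam : ℝ)
    (a : ℝ → ℝ)
    (haC2 : ContDiffOn ℝ 2 a (Set.Ioo 0 π))
    (hode : ∀ r ∈ Set.Ioo (0:ℝ) π,
      deriv (deriv a) r + ((m:ℝ) - 1) * (Real.cos r / Real.sin r) * deriv a r
        - (lam / Real.sin r ^ 2) * a r = 0)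
    (ha0 : a =O[nhdsWithin 0 (Set.Ioi 0)] fun r => r ^ 2)
    (ha'0 : deriv a =O[nhdsWithin 0 (Set.Ioi 0)] fun r => r) :
    ∀ r ∈ Set.Ioo (0:ℝ) π,
      IntervalIntegrable (fun t => a t / Real.sin t ^ 2) MeasureTheory.volume 0 r ∧
      deriv a r = -((m:ℝ) - 1) * (Real.cos r / Real.sin r) * a r
        + (lam - ((m:ℝ) - 1)) * ∫ t in (0:ℝ)..r, a t / Real.sin t ^ 2 := by
  intro r hr
  have hsin : ∀ t ∈ Ioo 0 π, sin t ≠ 0 := fun t ht => (sin_pos_of_pos_of_lt_pi ht.1 ht.2).ne'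
  have hF : ∀ t ∈ Ioo 0 π,
      HasDerivAt (fun s => deriv a s + ((m : ℝ) - 1) * (cos s / sin s * a s))
        ((lam - ((m : ℝ) - 1)) * (a t / sin t ^ 2)) t := fun t ht =>
    hasDerivAt_deriv_add_mul_cot_mul (hsin t ht)
      ((haC2.differentiableOn two_ne_zero).differentiableAt (isOpen_Ioo.mem_nhds ht))
      (((haC2.deriv_of_isOpen isOpen_Ioo one_add_one_eq_two.le).differentiableOn
        one_ne_zero).differentiableAt (isOpen_Ioo.mem_nhds ht)) (hode t ht)
  have hint : IntervalIntegrable (fun t => a t / sin t ^ 2) volume 0 r := by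
    refine intervalIntegrable_of_continuousOn_Ioc_of_isBigO_one hr.1 ?_ (isBigO_div_sin_sq_one ha0)
    exact (haC2.continuousOn.div (continuous_sin.pow 2).continuousOn
      fun t ht => pow_ne_zero 2 (hsin t ht)).mono fun t ht => ⟨ht.1, ht.2.trans_lt hr.2⟩
  refine ⟨hint, ?_⟩
  have hF0 : Tendsto (fun s => deriv a s + ((m : ℝ) - 1) * (cos s / sin s * a s))
      (𝓝[>] 0) (𝓝 0) := by
    simpa using (ha'0.trans_tendsto (tendsto_nhdsWithin_of_tendsto_nhds tendsto_id)).add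
      ((tendsto_cot_mul_nhdsGT_zero ha0).const_mul ((m : ℝ) - 1))
  have hFTC := intervalIntegral.integral_eq_sub_of_hasDerivAt_of_tendsto hr.1
    (fun t ht => hF t ⟨ht.1, ht.2.trans hr.2⟩) (hint.const_mul _) hF0
    ((hF r hr).continuousAt.tendsto.mono_left nhdsWithin_le_nhds)
  rw [intervalIntegral.integral_const_mul] at hFTC
  linarith

theorem stmt_14 (m : ℕ) (hm : 2 ≤ m) (lam : ℝ) (hlam : (m:ℝ) - 1 < lam)
    (a : ℝ → ℝ)
    (haC2 : ContDiffOn ℝ 2 a (Set.Ioo 0 π))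
    (hode : ∀ r ∈ Set.Ioo (0:ℝ) π,
      deriv (deriv a) r + ((m:ℝ) - 1) * (Real.cos r / Real.sin r) * deriv a r
        - (lam / Real.sin r ^ 2) * a r = 0)
    (ha0 : a =O[nhdsWithin 0 (Set.Ioi 0)] fun r => r ^ 2)
    (ha'0 : deriv a =O[nhdsWithin 0 (Set.Ioi 0)] fun r => r) :
    ∀ r ∈ Set.Ioo (0:ℝ) π,
      IntervalIntegrable (fun t => a t / Real.sin t ^ 2) MeasureTheory.volume 0 r ∧
      deriv a r = -((m:ℝ) - 1) * (Real.cos r / Real.sin r) * a r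
        + (lam - ((m:ℝ) - 1)) * ∫ t in (0:ℝ)..r, a t / Real.sin t ^ 2 :=
  stmt_14_general m lam a haC2 hode ha0 ha'0
end

section
/- Let m ≥ 2 be an integer. Define F(x) = ∫₀^x sin(t)^{m−1} dt, a₁(r) = m·F(r)/sin(r)^{m−1} for r ∈ (0,π), and for α ∈ (0,π) with 2F(α) < F(π) let β(α) ∈ (0,π) be given by F(β(α)) = 2F(α). Set σ_Ω(α) = (m−1)·cos(α)/sin(α) and σ_B(α) = a₁'(π−β(α))/a₁(π−β(α)). Then σ_Ω(α)/σ_B(α) → 2^{1/m} as α → 0⁺; in particular, since 2^{1/m} > 1, there exists α ∈ (0,π/2) with 2F(α) < F(π) such that σ_Ω(α) > σ_B(α). -/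
/-!
Since `sin t ≤ t` and `cos t ≤ 1`, the integral `F x = ∫₀ˣ sin^(m-1)` is squeezed between
`sin^m x / m` and `x^m / m`, so `F x ~ sin^m x / m` as `x → 0⁺`; hence `F (β α) = 2 F α` forces
`β α → 0` and `sin (β α) / sin α → 2^(1/m)`. Writing `b = β α`, the logarithmic derivative of `a₁`
at `π - b` is `sin^(m-1) b / F (π - b) + (m - 1) cot b`; multiplying numerator and denominator of
`σ_Ω / σ_B` by `sin b` gives `(m - 1) cos α · (sin b / sin α)` over
`sin^m b / F (π - b) + (m - 1) cos b`, which tends to `(m - 1) 2^(1/m) / (m - 1)`.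
-/

open Real Filter Set Topology

-- `sinPowIntegral n` and `radialPart n` are the paper's `F` and `a₁` for `m = n + 1`.
noncomputable def sinPowIntegral (n : ℕ) (x : ℝ) : ℝ := ∫ t in (0:ℝ)..x, sin t ^ n

section sinPowIntegral

variable (n : ℕ)

theorem hasDerivAt_sinPowIntegral (x : ℝ) : HasDerivAt (sinPowIntegral n) (sin x ^ n) x :=
  intervalIntegral.integral_hasDerivAt_right ((continuous_sin.pow n).intervalIntegrable 0 x)
    (continuous_sin.pow n).stronglyMeasurable.stronglyMeasurableAtFilter
    (continuous_sin.pow n).continuousAt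

theorem continuous_sinPowIntegral : Continuous (sinPowIntegral n) :=
  continuous_iff_continuousAt.2 fun x => (hasDerivAt_sinPowIntegral n x).continuousAt

@[simp]
theorem sinPowIntegral_zero : sinPowIntegral n 0 = 0 := intervalIntegral.integral_same

theorem strictMonoOn_sinPowIntegral : StrictMonoOn (sinPowIntegral n) (Icc 0 π) := by
  refine strictMonoOn_of_deriv_pos (convex_Icc 0 π) (continuous_sinPowIntegral n).continuousOn
    fun x hx => ?_
  rw [interior_Icc] at hx
  rw [(hasDerivAt_sinPowIntegral n x).deriv]
  exact pow_pos (sin_pos_of_pos_of_lt_pi hx.1 hx.2) n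

variable {n}

theorem sinPowIntegral_pos {x : ℝ} (hx : 0 < x) (hxπ : x ≤ π) : 0 < sinPowIntegral n x := by
  simpa using strictMonoOn_sinPowIntegral n ⟨le_rfl, pi_pos.le⟩ ⟨hx.le, hxπ⟩ hx

theorem sinPowIntegral_le_pow_div {x : ℝ} (hx : 0 ≤ x) (hxπ : x ≤ π) :
    sinPowIntegral n x ≤ x ^ (n + 1) / (n + 1) := by
  have h : sinPowIntegral n x ≤ ∫ t in (0:ℝ)..x, t ^ n :=
    intervalIntegral.integral_mono_on hx ((continuous_sin.pow n).intervalIntegrable 0 x)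
      ((continuous_pow n).intervalIntegrable 0 x) fun t ht =>
        pow_le_pow_left₀ (sin_nonneg_of_nonneg_of_le_pi ht.1 (ht.2.trans hxπ)) (sin_le ht.1) n
  simpa using h

theorem sin_pow_div_le_sinPowIntegral {x : ℝ} (hx : 0 ≤ x) (hxπ : x ≤ π) :
    sin x ^ (n + 1) / (n + 1) ≤ sinPowIntegral n x := by
  have hderiv (t : ℝ) : HasDerivAt (fun s => sin s ^ (n + 1) / (n + 1)) (sin t ^ n * cos t) t := by
    refine (((hasDerivAt_sin t).fun_pow (n + 1)).div_const ((n:ℝ) + 1)).congr_deriv ?_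
    rw [Nat.add_sub_cancel, Nat.cast_add_one]
    field_simp
  have hcont : Continuous fun t => sin t ^ n * cos t := (continuous_sin.pow n).mul continuous_cos
  calc sin x ^ (n + 1) / (n + 1) = ∫ t in (0:ℝ)..x, sin t ^ n * cos t := by
        rw [intervalIntegral.integral_eq_sub_of_hasDerivAt (fun t _ => hderiv t)
          (hcont.intervalIntegrable 0 x)]
        simp
    _ ≤ sinPowIntegral n x :=
        intervalIntegral.integral_mono_on hx (hcont.intervalIntegrable 0 x)
          ((continuous_sin.pow n).intervalIntegrable 0 x) fun t ht =>
            mul_le_of_le_one_right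
              (pow_nonneg (sin_nonneg_of_nonneg_of_le_pi ht.1 (ht.2.trans hxπ)) n) (cos_le_one t)

theorem tendsto_sinPowIntegral_div_sin_pow :
    Tendsto (fun x => sinPowIntegral n x / sin x ^ (n + 1)) (𝓝[>] 0) (𝓝 (1 / (n + 1))) := by
  have hsinc : Tendsto (fun x => (sinc x)⁻¹ ^ (n + 1) / (n + 1)) (𝓝[>] 0) (𝓝 (1 / (n + 1))) := by
    simpa using (((continuous_sinc.tendsto 0).inv₀ (by simp)).pow (n + 1)).div_const
      ((n:ℝ) + 1) |>.mono_left nhdsWithin_le_nhds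
  refine tendsto_of_tendsto_of_tendsto_of_le_of_le' tendsto_const_nhds hsinc ?_ ?_ <;>
    filter_upwards [Ioo_mem_nhdsGT pi_pos] with x hx <;>
    have hsin : 0 < sin x ^ (n + 1) := pow_pos (sin_pos_of_pos_of_lt_pi hx.1 hx.2) _
  · rw [le_div_iff₀ hsin, div_mul_eq_mul_div, one_mul]
    exact sin_pow_div_le_sinPowIntegral hx.1.le hx.2.le
  · rw [sinc_of_ne_zero hx.1.ne', inv_div, div_pow, div_right_comm]
    exact div_le_div_of_nonneg_right (sinPowIntegral_le_pow_div hx.1.le hx.2.le) hsin.le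

theorem tendsto_nhdsGT_zero_of_sinPowIntegral_eq_mul {ι : Type*} {l : Filter ι} {a b : ι → ℝ}
    (ha : Tendsto a l (𝓝[>] 0)) (hb : ∀ᶠ i in l, b i ∈ Ioo 0 π) (c : ℝ)
    (hab : ∀ᶠ i in l, sinPowIntegral n (b i) = c * sinPowIntegral n (a i)) :
    Tendsto b l (𝓝[>] 0) := by
  have hFa := ((continuous_sinPowIntegral n).tendsto 0).comp (ha.mono_right nhdsWithin_le_nhds)
  have hF : Tendsto (fun i => sinPowIntegral n (b i)) l (𝓝 0) := by
    simpa using (hFa.const_mul c).congr' (hab.mono fun _ h => h.symm)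
  refine tendsto_nhdsWithin_iff.2 ⟨tendsto_order.2 ⟨fun x hx => ?_, fun ε hε => ?_⟩,
    hb.mono fun i hi => hi.1⟩
  · exact hb.mono fun i hi => hx.trans hi.1
  · have hε' : 0 < min ε π := lt_min hε pi_pos
    have hFε := sinPowIntegral_pos (n := n) hε' (min_le_right ε π)
    filter_upwards [hb, hF.eventually_lt_const hFε] with i hi hFi
    exact (((strictMonoOn_sinPowIntegral n).lt_iff_lt ⟨hi.1.le, hi.2.le⟩
      ⟨hε'.le, min_le_right ε π⟩).1 hFi).trans_le (min_le_left ε π)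

theorem tendsto_sin_div_sin_of_sinPowIntegral_eq_mul {ι : Type*} {l : Filter ι} {a b : ι → ℝ}
    (ha : Tendsto a l (𝓝[>] 0)) (hb : Tendsto b l (𝓝[>] 0)) {c : ℝ} (hc : 0 < c)
    (hab : ∀ᶠ i in l, sinPowIntegral n (b i) = c * sinPowIntegral n (a i)) :
    Tendsto (fun i => sin (b i) / sin (a i)) l (𝓝 (c ^ (1 / ((n:ℝ) + 1)))) := by
  have hq : Tendsto (fun i => c * (sinPowIntegral n (a i) / sin (a i) ^ (n + 1))
      / (sinPowIntegral n (b i) / sin (b i) ^ (n + 1))) l (𝓝 c) := by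
    have h := ((tendsto_sinPowIntegral_div_sin_pow (n := n) |>.comp ha).const_mul c).div
      (tendsto_sinPowIntegral_div_sin_pow (n := n) |>.comp hb) (by positivity)
    rwa [mul_div_cancel_right₀ c (by positivity)] at h
  refine (hq.rpow_const (Or.inl hc.ne')).congr' ?_
  filter_upwards [ha (Ioo_mem_nhdsGT pi_pos), hb (Ioo_mem_nhdsGT pi_pos), hab] with i hai hbi habi
  have hsa : 0 < sin (a i) := sin_pos_of_pos_of_lt_pi hai.1 hai.2
  have hsb : 0 < sin (b i) := sin_pos_of_pos_of_lt_pi hbi.1 hbi.2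
  have hFa : 0 < sinPowIntegral n (a i) := sinPowIntegral_pos hai.1 hai.2.le
  have : c * (sinPowIntegral n (a i) / sin (a i) ^ (n + 1))
      / (sinPowIntegral n (b i) / sin (b i) ^ (n + 1)) = (sin (b i) / sin (a i)) ^ (n + 1) := by
    rw [habi, div_pow]
    field_simp
  rw [this, ← rpow_natCast, ← rpow_mul (by positivity)]
  push_cast
  rw [mul_one_div_cancel (by positivity), rpow_one]

end sinPowIntegral

noncomputable def radialPart (n : ℕ) (r : ℝ) : ℝ := ((n:ℝ) + 1) * sinPowIntegral n r / sin r ^ n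

section radialPart

variable {n : ℕ}

theorem deriv_radialPart_div {r : ℝ} (hs : sin r ≠ 0) (hF : sinPowIntegral n r ≠ 0) :
    deriv (radialPart n) r / radialPart n r
      = sin r ^ n / sinPowIntegral n r - n * cos r / sin r := by
  have h : HasDerivAt (radialPart n) _ r :=
    ((hasDerivAt_sinPowIntegral n r).const_mul ((n:ℝ) + 1)).fun_div
      ((hasDerivAt_sin r).fun_pow n) (pow_ne_zero n hs)
  rw [h.deriv, radialPart]
  have hpow : (n:ℝ) * sin r ^ (n - 1) = n * sin r ^ n / sin r := by
    rcases n with _ | k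
    · simp
    · rw [pow_succ, mul_div_assoc, mul_div_cancel_right₀ _ hs, Nat.add_sub_cancel]
  rw [hpow]
  field_simp

theorem deriv_radialPart_div_pi_sub_mul_sin {b : ℝ} (hb : b ∈ Ioo 0 π) :
    deriv (radialPart n) (π - b) / radialPart n (π - b) * sin b
      = sin b ^ (n + 1) / sinPowIntegral n (π - b) + n * cos b := by
  have hsb : sin b ≠ 0 := (sin_pos_of_pos_of_lt_pi hb.1 hb.2).ne'
  have hF : sinPowIntegral n (π - b) ≠ 0 :=
    (sinPowIntegral_pos (by linarith [hb.2]) (by linarith [hb.1])).ne'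
  rw [deriv_radialPart_div (by rwa [sin_pi_sub]) hF, sin_pi_sub, cos_pi_sub]
  field_simp
  ring

theorem tendsto_deriv_radialPart_div_pi_sub_mul_sin {ι : Type*} {l : Filter ι} {b : ι → ℝ}
    (hb : Tendsto b l (𝓝[>] 0)) :
    Tendsto (fun i => deriv (radialPart n) (π - b i) / radialPart n (π - b i) * sin (b i))
      l (𝓝 n) := by
  have hb0 : Tendsto b l (𝓝 0) := hb.mono_right nhdsWithin_le_nhds
  have hsin : Tendsto (fun i => sin (b i) ^ (n + 1)) l (𝓝 0) := by
    simpa using ((continuous_sin.tendsto 0).comp hb0).pow (n + 1)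
  have hF : Tendsto (fun i => sinPowIntegral n (π - b i)) l (𝓝 (sinPowIntegral n π)) := by
    have hπb := (tendsto_const_nhds (x := π)).sub hb0
    rw [sub_zero] at hπb
    exact ((continuous_sinPowIntegral n).tendsto π).comp hπb
  have hcos : Tendsto (fun i => (n:ℝ) * cos (b i)) l (𝓝 n) := by
    simpa using ((continuous_cos.tendsto 0).comp hb0).const_mul (n:ℝ)
  have h := (hsin.div hF (sinPowIntegral_pos pi_pos le_rfl).ne').add hcos
  rw [zero_div, zero_add] at h
  refine h.congr' ?_
  filter_upwards [hb (Ioo_mem_nhdsGT pi_pos)] with i hi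
  exact (deriv_radialPart_div_pi_sub_mul_sin hi).symm

theorem tendsto_cot_div_deriv_radialPart_div_pi_sub {ι : Type*} {l : Filter ι} {a b : ι → ℝ}
    (hn : n ≠ 0) (ha : Tendsto a l (𝓝[>] 0)) (hb : Tendsto b l (𝓝[>] 0)) {c : ℝ} (hc : 0 < c)
    (hab : ∀ᶠ i in l, sinPowIntegral n (b i) = c * sinPowIntegral n (a i)) :
    Tendsto (fun i => (n * cos (a i) / sin (a i))
        / (deriv (radialPart n) (π - b i) / radialPart n (π - b i)))
      l (𝓝 (c ^ (1 / ((n:ℝ) + 1)))) := by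
  have hcos : Tendsto (fun i => cos (a i)) l (𝓝 1) := by
    have h := (continuous_cos.tendsto 0).comp (ha.mono_right nhdsWithin_le_nhds)
    rwa [cos_zero] at h
  have hsin := tendsto_sin_div_sin_of_sinPowIntegral_eq_mul ha hb hc hab
  have h := ((hcos.const_mul (n:ℝ)).mul hsin).div
    (tendsto_deriv_radialPart_div_pi_sub_mul_sin hb) (Nat.cast_ne_zero.2 hn)
  rw [mul_one, mul_div_cancel_left₀ _ (Nat.cast_ne_zero.2 hn)] at h
  refine h.congr' ?_
  filter_upwards [hb (Ioo_mem_nhdsGT pi_pos)] with i hi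
  rw [Pi.div_apply, ← mul_div_assoc, mul_div_right_comm,
    mul_div_mul_right _ _ (sin_pos_of_pos_of_lt_pi hi.1 hi.2).ne']

end radialPart

theorem nhdsWithin_setOf_mem_Ioo_and_lt_eq_nhdsGT {a b c : ℝ} {f : ℝ → ℝ} (hab : a < b)
    (hf : ContinuousAt f a) (hfa : f a < c) :
    𝓝[{x | x ∈ Ioo a b ∧ f x < c}] a = 𝓝[>] a :=
  (nhdsWithin_inter_of_mem' (mem_nhdsWithin_of_mem_nhds
    (hf.eventually_lt continuousAt_const hfa))).trans (nhdsWithin_Ioo_eq_nhdsGT hab)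

theorem stmt_17 (m : ℕ) (hm : 2 ≤ m) (F a₁ β : ℝ → ℝ)
    (hF : ∀ x, F x = ∫ t in (0:ℝ)..x, Real.sin t ^ (m - 1))
    (ha₁ : ∀ r, a₁ r = (m:ℝ) * F r / Real.sin r ^ (m - 1))
    (hβ : ∀ α ∈ Set.Ioo (0:ℝ) π, 2 * F α < F π →
      β α ∈ Set.Ioo (0:ℝ) π ∧ F (β α) = 2 * F α) :
    Filter.Tendsto
      (fun α => (((m:ℝ) - 1) * Real.cos α / Real.sin α)
        / (deriv a₁ (π - β α) / a₁ (π - β α)))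
      (nhdsWithin 0 {α : ℝ | α ∈ Set.Ioo (0:ℝ) π ∧ 2 * F α < F π})
      (nhds ((2:ℝ) ^ (1 / (m:ℝ)))) ∧
    ∃ α ∈ Set.Ioo (0:ℝ) (π/2), 2 * F α < F π ∧
      deriv a₁ (π - β α) / a₁ (π - β α)
        < ((m:ℝ) - 1) * Real.cos α / Real.sin α := by
  obtain ⟨n, rfl⟩ : ∃ n, m = n + 1 := ⟨m - 1, by omega⟩
  obtain rfl : F = sinPowIntegral n := funext hF
  obtain rfl : a₁ = radialPart n := funext fun r => by
    rw [ha₁, radialPart, Nat.cast_add_one, Nat.add_sub_cancel]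
  rw [Nat.cast_add_one, add_sub_cancel_right]
  have hL : 𝓝[{α | α ∈ Ioo 0 π ∧ 2 * sinPowIntegral n α < sinPowIntegral n π}] 0 = 𝓝[>] 0 :=
    nhdsWithin_setOf_mem_Ioo_and_lt_eq_nhdsGT pi_pos
      ((continuous_sinPowIntegral n).const_mul 2).continuousAt
      (by simpa using sinPowIntegral_pos pi_pos le_rfl)
  rw [hL]
  have hS : ∀ᶠ α in 𝓝[>] 0, α ∈ Ioo 0 π ∧ 2 * sinPowIntegral n α < sinPowIntegral n π :=
    hL ▸ self_mem_nhdsWithin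
  have hβS := hS.mono fun α hα => hβ α hα.1 hα.2
  have hβF := hβS.mono fun _ h => h.2
  have hβ0 :=
    tendsto_nhdsGT_zero_of_sinPowIntegral_eq_mul tendsto_id (hβS.mono fun _ h => h.1) 2 hβF
  have hlim := tendsto_cot_div_deriv_radialPart_div_pi_sub (by omega) tendsto_id hβ0 two_pos hβF
  refine ⟨hlim, ?_⟩
  -- `σ_B · sin β → n > 0` makes `σ_B` positive, so `σ_Ω / σ_B > 1` gives `σ_B < σ_Ω`.
  have hσB := (tendsto_deriv_radialPart_div_pi_sub_mul_sin hβ0).eventually_const_lt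
    (Nat.cast_pos.2 (by omega : 0 < n))
  have hgt := hlim.eventually_const_lt (one_lt_rpow (by norm_num) (by positivity))
  obtain ⟨α, ⟨hαS, ⟨hβα, -⟩, hσBα, hα⟩, hαhalf⟩ := ((hS.and (hβS.and (hσB.and hgt))).and
    (Ioo_mem_nhdsGT (half_pos pi_pos))).exists
  refine ⟨α, hαhalf, hαS.2, (one_lt_div ?_).1 hα⟩
  exact pos_of_mul_pos_left hσBα (sin_pos_of_pos_of_lt_pi hβα.1 hβα.2).le
end
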